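/- arXiv:2507.08888 — 11 statements merged into one kernel-verified Lean document; each statement's English description precedes it below -/
import Mathlib

section
/- For all real k > 0, ν > 0 and x > 0, the sequence n ↦ n!·(kν)^n·(nk/ν)^{x/(kν)−1} / (x·(x+kν)·(x+2kν)···(x+(n−1)kν)) converges, as n → ∞, to Γ_{k,ν}(x) = (k/ν)^{x/(kν)−1}·Γ(x/(kν)). -/
open Real Filter Topology

noncomputable def Gammaknu (k ν x : ℝ) : ℝ :=
  (k / ν) ^ (x / (k * ν) - 1) * Real.Gamma (x / (k * ν))

theorem stmt0 (k ν x : ℝ) (hk : 0 < k) (hν : 0 < ν) (hx : 0 < x) :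
    Filter.Tendsto
      (fun n : ℕ => (n.factorial : ℝ) * (k * ν) ^ n * ((n : ℝ) * k / ν) ^ (x / (k * ν) - 1) /
        ∏ j ∈ Finset.range n, (x + (j : ℝ) * (k * ν)))
      Filter.atTop (nhds (Gammaknu k ν x)) := by
  have hkν : (0:ℝ) < k * ν := mul_pos hk hν
  set t := x / (k * ν) with ht
  have ht0 : 0 < t := div_pos hx hkν
  have hxt : x = k * ν * t := by rw [ht, mul_div_assoc', mul_div_cancel_left₀ _ hkν.ne']
  -- limit of auxiliary sequence
  have hlim : Tendsto (fun n : ℕ => Real.GammaSeq t n * ((k/ν) ^ (t-1) * ((t + n)/n)))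
      atTop (𝓝 (Real.Gamma t * ((k/ν)^(t-1) * 1))) := by
    refine (Real.GammaSeq_tendsto_Gamma t).mul (tendsto_const_nhds.mul ?_)
    have h1 : Tendsto (fun n : ℕ => t * (n:ℝ)⁻¹ + 1) atTop (𝓝 (t * 0 + 1)) :=
      (tendsto_const_nhds.mul tendsto_inv_atTop_nhds_zero_nat).add tendsto_const_nhds
    rw [show t * 0 + 1 = (1:ℝ) by ring] at h1
    refine h1.congr' ?_
    filter_upwards [eventually_gt_atTop 0] with n hn
    have hn' : (n:ℝ) ≠ 0 := Nat.cast_ne_zero.mpr hn.ne'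
    field_simp
  have key : (fun n : ℕ => Real.GammaSeq t n * ((k/ν) ^ (t-1) * ((t + n)/n)))
      =ᶠ[atTop] (fun n : ℕ => (n.factorial : ℝ) * (k * ν) ^ n * ((n : ℝ) * k / ν) ^ (t - 1) /
        ∏ j ∈ Finset.range n, (x + (j : ℝ) * (k * ν))) := by
    filter_upwards [eventually_gt_atTop 0] with n hn
    have hn0 : (0:ℝ) < n := Nat.cast_pos.mpr hn
    have hprod : ∏ j ∈ Finset.range n, (x + (j : ℝ) * (k * ν))
        = (k * ν) ^ n * ∏ j ∈ Finset.range n, (t + j) := by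
      rw [show (k*ν)^n = ∏ _j ∈ Finset.range n, (k*ν) by simp, ← Finset.prod_mul_distrib]
      refine Finset.prod_congr rfl fun j _ => ?_
      rw [hxt]; ring
    have hP : (0:ℝ) < ∏ j ∈ Finset.range n, (t + j) :=
      Finset.prod_pos fun j _ => by positivity
    have hrq : ((n : ℝ) * k / ν) ^ (t - 1) = (n:ℝ) ^ (t-1) * (k/ν) ^ (t-1) := by
      rw [show (n : ℝ) * k / ν = (n:ℝ) * (k/ν) by ring,
        Real.mul_rpow hn0.le (div_pos hk hν).le]
    have hnt : (n:ℝ) ^ t = (n:ℝ) ^ (t-1) * n := by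
      rw [show t = (t-1) + 1 by ring, Real.rpow_add hn0, Real.rpow_one]
      ring
    rw [Real.GammaSeq, Finset.prod_range_succ, hprod, hrq, hnt]
    have h1 : (0:ℝ) < t + n := by positivity
    have h2 : (0:ℝ) < (k*ν)^n := by positivity
    field_simp
  have := hlim.congr' key
  simpa [Gammaknu, ht, mul_comm] using this
end

section
/- For all real k > 0, ν > 0 and x > 0, the infinite product ∏_{j=1}^∞ (1 + x/(j·kν))·e^{−x/(j·kν)} converges and 1/Γ_{k,ν}(x) = ν^{x/(kν)−1}·k^{−x/(kν)}·(x/ν)·e^{γx/(kν)}·∏_{j=1}^∞ (1 + x/(j·kν))·e^{−x/(j·kν)}, where γ is the Euler–Mascheroni constant. -/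
open Real Filter Topology

private lemma log_one_add_ge {u : ℝ} (hu : 0 < u) : u - u ^ 2 ≤ Real.log (1 + u) := by
  have h1u : 0 < 1 + u := by linarith
  have h := Real.log_le_sub_one_of_pos (inv_pos.mpr h1u)
  rw [Real.log_inv] at h
  have h2 : u / (1 + u) ≤ Real.log (1 + u) := by
    have : (1 + u)⁻¹ - 1 = -(u / (1 + u)) := by field_simp; ring
    rw [this] at h; linarith
  refine le_trans ?_ h2
  rw [div_eq_mul_inv, ← sub_nonneg]
  have : u * (1 + u)⁻¹ - (u - u ^ 2) = u ^ 3 / (1 + u) := by field_simp; ring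
  rw [this]
  positivity

private lemma weier_aux (t : ℝ) (ht : 0 < t) :
    Multipliable (fun j : ℕ => (1 + t / ((j : ℝ) + 1)) * Real.exp (-t / ((j : ℝ) + 1))) ∧
    (∏' j : ℕ, (1 + t / ((j : ℝ) + 1)) * Real.exp (-t / ((j : ℝ) + 1))) =
      Real.exp (-(Real.eulerMascheroniConstant * t)) / (t * Real.Gamma t) := by
  set f : ℕ → ℝ := fun j => (1 + t / ((j : ℝ) + 1)) * Real.exp (-t / ((j : ℝ) + 1)) with hf
  have hpos : ∀ j : ℕ, 0 < f j := by
    intro j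
    have h1 : 0 < (j : ℝ) + 1 := by positivity
    have h2 : 0 < 1 + t / ((j : ℝ) + 1) := by positivity
    exact mul_pos h2 (Real.exp_pos _)
  -- summability of logs
  have hlog : Summable (fun j : ℕ => Real.log (f j)) := by
    have hb : Summable (fun j : ℕ => t ^ 2 * (1 / ((j : ℝ) + 1) ^ 2)) := by
      apply Summable.mul_left
      have := (Real.summable_one_div_nat_pow (p := 2)).mpr one_lt_two
      exact_mod_cast (summable_nat_add_iff 1).mpr this
    have hub : ∀ j : ℕ, |Real.log (f j)| ≤ t ^ 2 * (1 / ((j : ℝ) + 1) ^ 2) := by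
      intro j
      set u : ℝ := t / ((j : ℝ) + 1) with hu
      have hj : (0 : ℝ) < (j : ℝ) + 1 := by positivity
      have hu0 : 0 < u := by positivity
      have h1u : 0 < 1 + u := by linarith
      have hflog : Real.log (f j) = Real.log (1 + u) - u := by
        rw [hf]
        simp only
        rw [Real.log_mul (by positivity) (Real.exp_ne_zero _), Real.log_exp, neg_div,
          sub_eq_add_neg]
      have hupper : Real.log (1 + u) ≤ u := by
        have := Real.log_le_sub_one_of_pos h1u; linarith
      have hlower := log_one_add_ge hu0
      have habs : |Real.log (f j)| ≤ u ^ 2 := by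
        rw [hflog, abs_le]
        constructor <;> nlinarith
      refine habs.trans (le_of_eq ?_)
      rw [hu, div_pow]
      ring
    exact Summable.of_abs (Summable.of_nonneg_of_le (fun j => abs_nonneg _) hub hb)
  have hhp : HasProd f (∏' j, f j) := by
    have := (Real.multipliable_of_summable_log hpos hlog).hasProd
    exact this
  refine ⟨⟨_, hhp⟩, ?_⟩
  -- identify the value via partial products
  have hΓpos := Real.Gamma_pos_of_pos ht
  have hP : Tendsto (fun n => ∏ j ∈ Finset.range n, f j) atTop (𝓝 (∏' j, f j)) :=
    hhp.tendsto_prod_nat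
  have hT : Tendsto (fun n : ℕ =>
      Real.exp (t * (Real.log n - (harmonic n : ℝ))) / (t * Real.GammaSeq t n)) atTop
      (𝓝 (Real.exp (-(Real.eulerMascheroniConstant * t)) / (t * Real.Gamma t))) := by
    apply Tendsto.div
    · apply Real.continuous_exp.continuousAt.tendsto.comp
      have h1 := Real.tendsto_harmonic_sub_log.const_mul t
      have h2 : Tendsto (fun n : ℕ => t * (Real.log n - (harmonic n : ℝ))) atTop
          (𝓝 (-(Real.eulerMascheroniConstant * t))) := by
        have h3 := h1.neg
        simp only [← mul_neg, neg_sub] at h3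
        convert h3 using 2
        ring
      exact h2
    · exact (Real.GammaSeq_tendsto_Gamma t).const_mul t
    · positivity
  have heq : ∀ᶠ n : ℕ in atTop, ∏ j ∈ Finset.range n, f j =
      Real.exp (t * (Real.log n - (harmonic n : ℝ))) / (t * Real.GammaSeq t n) := by
    filter_upwards [eventually_ge_atTop 1] with n hn
    have hn0 : (0 : ℝ) < n := by exact_mod_cast hn
    have hfact : (0 : ℝ) < (Nat.factorial n : ℝ) := by exact_mod_cast n.factorial_pos
    have hprodpos : 0 < ∏ j ∈ Finset.range (n + 1), (t + (j : ℝ)) := by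
      apply Finset.prod_pos
      intro j _
      positivity
    -- split product
    rw [show (fun j : ℕ => f j) = fun j : ℕ =>
        (1 + t / ((j : ℝ) + 1)) * Real.exp (-t / ((j : ℝ) + 1)) from rfl,
      Finset.prod_mul_distrib]
    have hexp : ∏ j ∈ Finset.range n, Real.exp (-t / ((j : ℝ) + 1)) =
        Real.exp (-(t * (harmonic n : ℝ))) := by
      rw [← Real.exp_sum]
      congr 1
      have hh : (harmonic n : ℝ) = ∑ j ∈ Finset.range n, ((j : ℝ) + 1)⁻¹ := by
        rw [harmonic]; push_cast; ring
      rw [hh, Finset.mul_sum, ← Finset.sum_neg_distrib]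
      apply Finset.sum_congr rfl
      intro j _
      have : (0:ℝ) < (j : ℝ) + 1 := by positivity
      field_simp
    have hmain : ∏ j ∈ Finset.range n, (1 + t / ((j : ℝ) + 1)) =
        (∏ j ∈ Finset.range (n + 1), (t + (j : ℝ))) / (t * (Nat.factorial n : ℝ)) := by
      have h1 : ∏ j ∈ Finset.range (n + 1), (t + (j : ℝ)) =
          (∏ j ∈ Finset.range n, (t + ((j : ℝ) + 1))) * t := by
        rw [Finset.prod_range_succ' (fun j => t + (j : ℝ)) n]
        push_cast
        rw [add_zero]
      have h2 : (∏ j ∈ Finset.range n, ((j : ℝ) + 1)) = (Nat.factorial n : ℝ) := by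
        rw [← Finset.prod_range_add_one_eq_factorial n]
        push_cast
        rfl
      rw [h1, ← h2, mul_comm t (∏ j ∈ Finset.range n, ((j : ℝ) + 1)),
        mul_div_mul_right _ _ ht.ne', ← Finset.prod_div_distrib]
      apply Finset.prod_congr rfl
      intro j _
      have : (0:ℝ) < (j : ℝ) + 1 := by positivity
      field_simp
      ring
    rw [hexp, hmain, Real.GammaSeq]
    have hnt : (n : ℝ) ^ t = Real.exp (t * Real.log n) := by
      rw [Real.rpow_def_of_pos hn0, mul_comm]
    rw [hnt, mul_sub, Real.exp_sub, Real.exp_neg]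
    field_simp
  exact tendsto_nhds_unique (hP.congr' heq) hT

theorem stmt4 (k ν x : ℝ) (hk : 0 < k) (hν : 0 < ν) (hx : 0 < x) :
    Multipliable (fun j : ℕ =>
        (1 + x / (((j : ℝ) + 1) * (k * ν))) * Real.exp (-x / (((j : ℝ) + 1) * (k * ν)))) ∧
    1 / Gammaknu k ν x =
      ν ^ (x / (k * ν) - 1) * k ^ (-x / (k * ν)) * (x / ν) *
        Real.exp (Real.eulerMascheroniConstant * x / (k * ν)) *
        ∏' j : ℕ, (1 + x / (((j : ℝ) + 1) * (k * ν))) *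
          Real.exp (-x / (((j : ℝ) + 1) * (k * ν))) := by
  have hc : 0 < k * ν := mul_pos hk hν
  set t : ℝ := x / (k * ν) with htdef
  have ht : 0 < t := div_pos hx hc
  have hterm : (fun j : ℕ =>
      (1 + x / (((j : ℝ) + 1) * (k * ν))) * Real.exp (-x / (((j : ℝ) + 1) * (k * ν)))) =
      fun j : ℕ => (1 + t / ((j : ℝ) + 1)) * Real.exp (-t / ((j : ℝ) + 1)) := by
    funext j
    have h1 : x / (((j : ℝ) + 1) * (k * ν)) = t / ((j : ℝ) + 1) := by
      rw [div_mul_eq_div_div_swap, htdef]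
    rw [h1, show -x / (((j : ℝ) + 1) * (k * ν)) = -t / ((j : ℝ) + 1) by
      rw [neg_div, neg_div, h1]]
  obtain ⟨hm, hval⟩ := weier_aux t ht
  constructor
  · rw [hterm]; exact hm
  · rw [hterm, hval]
    have hΓpos := Real.Gamma_pos_of_pos ht
    rw [Gammaknu, ← htdef]
    rw [show -x / (k * ν) = -t by rw [neg_div, htdef]]
    rw [show Real.eulerMascheroniConstant * x / (k * ν) = Real.eulerMascheroniConstant * t by
      rw [htdef, mul_div_assoc]]
    rw [show x / ν = t * k by rw [htdef]; field_simp]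
    rw [Real.exp_neg]
    have hA : (k / ν) ^ (t - 1) = k ^ (t - 1) / ν ^ (t - 1) :=
      Real.div_rpow hk.le hν.le _
    have hknt : k ^ (-t) = (k ^ (t - 1) * k)⁻¹ := by
      nth_rewrite 3 [← Real.rpow_one k]
      rw [← Real.rpow_add hk, ← Real.rpow_neg hk.le]
      norm_num
    rw [hA, hknt]
    have hE : Real.exp (Real.eulerMascheroniConstant * t) ≠ 0 := (Real.exp_pos _).ne'
    have hk1 : (0:ℝ) < k ^ (t - 1) := Real.rpow_pos_of_pos hk _
    have hν1 : (0:ℝ) < ν ^ (t - 1) := Real.rpow_pos_of_pos hν _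
    field_simp
end

section
/- Let k > 0 and ν > 0 be real, and let f : (0,∞) → (0,∞) satisfy: (i) f(kν) = 1; (ii) f(x + kν) = x·ν^{−2}·f(x) for all x > 0; (iii) log f is convex on (0,∞). Then f(x) = Γ_{k,ν}(x) for all x > 0. -/
open Real Filter Topology

theorem stmt5 (k ν : ℝ) (hk : 0 < k) (hν : 0 < ν) (f : ℝ → ℝ)
    (hpos : ∀ x, 0 < x → 0 < f x)
    (h1 : f (k * ν) = 1)
    (h2 : ∀ x, 0 < x → f (x + k * ν) = x / ν ^ 2 * f x)
    (h3 : ConvexOn ℝ (Set.Ioi 0) (fun x => Real.log (f x))) :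
    ∀ x, 0 < x → f x = Gammaknu k ν x := by
  have hkν : 0 < k * ν := mul_pos hk hν
  have hkν' : (0:ℝ) < ν / k := div_pos hν hk
  set g : ℝ → ℝ := fun y => f (k * ν * y) * (ν / k) ^ (y - 1) with hg
  have hgpos : ∀ {y : ℝ}, 0 < y → 0 < g y := fun {y} hy =>
    mul_pos (hpos _ (mul_pos hkν hy)) (rpow_pos_of_pos hkν' _)
  have hgone : g 1 = 1 := by simp [hg, h1]
  have hgfeq : ∀ {y : ℝ}, 0 < y → g (y + 1) = y * g y := by
    intro y hy
    have h2' := h2 (k * ν * y) (mul_pos hkν hy)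
    have : k * ν * (y + 1) = k * ν * y + k * ν := by ring
    rw [hg]
    simp only [this, h2']
    rw [show y + 1 - 1 = (y - 1) + 1 by ring, rpow_add hkν' (y-1) 1, rpow_one]
    field_simp
  have hgconv : ConvexOn ℝ (Set.Ioi 0) (Real.log ∘ g) := by
    have heq : ∀ y ∈ Set.Ioi (0:ℝ), (Real.log ∘ g) y =
        Real.log (f (k * ν * y)) + ((y - 1) * Real.log (ν / k)) := by
      intro y hy
      simp only [Function.comp_apply, hg]
      rw [Real.log_mul (ne_of_gt (hpos _ (mul_pos hkν hy)))
        (ne_of_gt (rpow_pos_of_pos hkν' _)), Real.log_rpow hkν']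
    have hmap : ConvexOn ℝ (Set.Ioi 0) (fun y => Real.log (f (k * ν * y))) := by
      have := h3.comp_affineMap (LinearMap.toAffineMap (LinearMap.smulRight (LinearMap.id : ℝ →ₗ[ℝ] ℝ) (k * ν)))
      have hpre : ((LinearMap.toAffineMap (LinearMap.smulRight (LinearMap.id : ℝ →ₗ[ℝ] ℝ) (k * ν))) ⁻¹' (Set.Ioi 0)) = Set.Ioi 0 := by
        ext y
        simp [mul_pos_iff_of_pos_right hkν, mul_comm]
      rw [hpre] at this
      convert this using 2 with y
      case e'_12 => simp [mul_comm]
      all_goals rfl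
    have haff : ConvexOn ℝ (Set.Ioi 0) (fun y : ℝ => (y - 1) * Real.log (ν / k)) := by
      have := ((LinearMap.smulRight (LinearMap.id : ℝ →ₗ[ℝ] ℝ) (Real.log (ν / k))).convexOn
        (convex_Ioi 0)).add_const (-(Real.log (ν / k)))
      refine this.congr fun y hy => ?_
      simp
      ring
    exact (hmap.add haff).congr fun y hy => (heq y hy).symm
  have key := Real.eq_Gamma_of_log_convex hgconv (fun {y} hy => hgfeq hy)
    (fun {y} hy => hgpos hy) hgone
  intro x hx
  have hy : 0 < x / (k * ν) := div_pos hx hkν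
  have hkey := key (Set.mem_Ioi.mpr hy)
  have hxx : k * ν * (x / (k * ν)) = x := by field_simp
  rw [hg] at hkey
  simp only [hxx] at hkey
  unfold Gammaknu
  have hinv : (ν / k : ℝ) ^ (x / (k * ν) - 1) = ((k / ν) ^ (x / (k * ν) - 1))⁻¹ := by
    rw [show (ν / k : ℝ) = (k / ν)⁻¹ by field_simp, Real.inv_rpow (le_of_lt (div_pos hk hν))]
  rw [hinv] at hkey
  have hne : ((k / ν : ℝ) ^ (x / (k * ν) - 1)) ≠ 0 := ne_of_gt (rpow_pos_of_pos (div_pos hk hν) _)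
  field_simp at hkey
  rw [show (x - k * ν) / (k * ν) = x / (k * ν) - 1 by field_simp] at hkey
  rw [hkey, mul_comm]
end

section
/- For all real k > 0, ν > 0 and x > 0, B_{k,ν}(x,x) = 2^{1 − 2x/(kν)}·B_{k,ν}(x, kν/2). -/
open Real Filter Topology

noncomputable def Betaknu (k ν x y : ℝ) : ℝ :=
  Gammaknu k ν x * Gammaknu k ν y / Gammaknu k ν (x + y)

lemma key_aux (c t : ℝ) (hc : 0 < c) (ht : 0 < t) :
    c^(t-1) * Real.Gamma t * (c^(t-1) * Real.Gamma t) / (c^(2*t-1) * Real.Gamma (2*t)) =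
    (2:ℝ)^(1-2*t) * (c^(t-1) * Real.Gamma t * (c^((1:ℝ)/2-1) * Real.Gamma (1/2)) /
      (c^(t+1/2-1) * Real.Gamma (t+1/2))) := by
  have dup := Real.Gamma_mul_Gamma_add_half t
  have gh : Real.Gamma (1 / 2) = Real.sqrt π := Real.Gamma_one_half_eq
  have g1 : Real.Gamma t ≠ 0 := (Real.Gamma_pos_of_pos ht).ne'
  have g2 : 0 < Real.Gamma (2*t) := Real.Gamma_pos_of_pos (by linarith)
  have g3 : 0 < Real.Gamma (t + 1/2) := Real.Gamma_pos_of_pos (by linarith)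
  have e1 : c ^ (2*t-1) * c ^ ((1:ℝ)/2 - 1) = c ^ (t-1) * c ^ (t+1/2-1) := by
    rw [← Real.rpow_add hc, ← Real.rpow_add hc]; congr 1; ring
  rw [gh, mul_div_assoc', div_eq_div_iff (by positivity) (by positivity)]
  linear_combination (c^(t-1) * c^(t-1) * Real.Gamma t * c^(t+1/2-1)) * dup -
    ((2:ℝ)^(1-2*t) * c^(t-1) * Real.Gamma t * Real.sqrt π * Real.Gamma (2*t)) * e1

theorem stmt8 (k ν x : ℝ) (hk : 0 < k) (hν : 0 < ν) (hx : 0 < x) :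
    Betaknu k ν x x = (2 : ℝ) ^ (1 - 2 * x / (k * ν)) * Betaknu k ν x (k * ν / 2) := by
  have hkν : 0 < k * ν := mul_pos hk hν
  have hc0 : 0 < k / ν := div_pos hk hν
  have ht0 : 0 < x / (k * ν) := div_pos hx hkν
  have h1 : (x + x) / (k * ν) = 2 * (x / (k * ν)) := by ring
  have h2 : (x + k * ν / 2) / (k * ν) = x / (k * ν) + 1 / 2 := by
    rw [add_div]
    congr 1
    rw [div_div, div_eq_div_iff (by positivity) (by positivity)]
    ring
  have h3 : (k * ν / 2) / (k * ν) = (1 : ℝ) / 2 := by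
    rw [div_div, div_eq_div_iff (by positivity) (by positivity)]
    ring
  have h4 : 1 - 2 * x / (k * ν) = 1 - 2 * (x / (k * ν)) := by ring
  unfold Betaknu Gammaknu
  rw [h1, h2, h3, h4]
  exact key_aux (k / ν) (x / (k * ν)) hc0 ht0
end

section
/- Let k ≥ ν > 0 be real. Then log Γ_{k,ν} is superadditive on (kν, ∞): for all x, y > kν, log Γ_{k,ν}(x + y) ≥ log Γ_{k,ν}(x) + log Γ_{k,ν}(y). -/
open Real Filter Topology

lemma logGamma_superadd {x y : ℝ} (hx : 1 < x) (hy : 1 < y) :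
    Real.log (Real.Gamma x) + Real.log (Real.Gamma y) ≤ Real.log (Real.Gamma (x + y)) := by
  have hc := Real.convexOn_log_Gamma
  set f : ℝ → ℝ := Real.log ∘ Real.Gamma with hf
  have hf1 : f 1 = 0 := by simp [hf, Real.Gamma_one]
  set z : ℝ := x + y - 1 with hz
  have hzx : x < z := by linarith
  have hzy : y < z := by linarith
  have h1m : (1 : ℝ) ∈ Set.Ioi (0:ℝ) := by norm_num
  have hxm : x ∈ Set.Ioi (0:ℝ) := by simp; linarith
  have hym : y ∈ Set.Ioi (0:ℝ) := by simp; linarith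
  have hzm : z ∈ Set.Ioi (0:ℝ) := by simp; linarith
  have s1 : (f x - f 1) / (x - 1) ≤ (f z - f 1) / (z - 1) :=
    hc.secant_mono h1m hxm hzm (by linarith) (by linarith) (le_of_lt hzx)
  have s2 : (f 1 - f z) / (1 - z) ≤ (f y - f z) / (y - z) :=
    hc.secant_mono hzm h1m hym (by linarith) (by linarith) (le_of_lt hy)
  rw [hf1] at s1 s2
  have e1 : (0 - f z) / (1 - z) = (f z - 0) / (z - 1) := by
    rw [div_eq_div_iff (by linarith) (by linarith)]; ring
  rw [e1] at s2
  have s3 : (f x - 0) / (x - 1) ≤ (f y - f z) / (y - z) := le_trans s1 s2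
  have hyz : y - z = -(x - 1) := by rw [hz]; ring
  have hx1 : (0:ℝ) < x - 1 := by linarith
  have s4 : f x ≤ f z - f y := by
    rw [hyz, div_neg, sub_zero, div_le_iff₀ hx1] at s3
    have hcanc : (f y - f z) / (x - 1) * (x - 1) = f y - f z :=
      div_mul_cancel₀ _ (ne_of_gt hx1)
    nlinarith [s3, hcanc]
  -- f (x+y) = log (z) + f z ≥ f z
  have hGrec : Real.Gamma (x + y) = z * Real.Gamma z := by
    have : x + y = z + 1 := by rw [hz]; ring
    rw [this, Real.Gamma_add_one (by linarith : z ≠ 0)]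
  have hGz : 0 < Real.Gamma z := Real.Gamma_pos_of_pos (by linarith)
  have : f (x + y) = Real.log z + f z := by
    simp only [hf, Function.comp_apply, hGrec]
    rw [Real.log_mul (by linarith) (ne_of_gt hGz)]
  have hlogz : 0 ≤ Real.log z := Real.log_nonneg (by linarith)
  show f x + f y ≤ f (x + y)
  rw [this]; linarith

theorem stmt12 (k ν : ℝ) (hν : 0 < ν) (hkν : ν ≤ k) :
    ∀ x y : ℝ, k * ν < x → k * ν < y →
      Real.log (Gammaknu k ν x) + Real.log (Gammaknu k ν y) ≤
        Real.log (Gammaknu k ν (x + y)) := by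
  intro x y hx hy
  have hk : 0 < k := lt_of_lt_of_le hν hkν
  have hkν0 : 0 < k * ν := mul_pos hk hν
  have hq : (0:ℝ) < k / ν := div_pos hk hν
  set t := x / (k * ν) with ht
  set u := y / (k * ν) with hu
  have ht1 : 1 < t := (one_lt_div hkν0).mpr hx
  have hu1 : 1 < u := (one_lt_div hkν0).mpr hy
  have hsum : (x + y) / (k * ν) = t + u := by rw [ht, hu]; ring
  have hlog : ∀ s : ℝ, 0 < s →
      Real.log ((k / ν) ^ (s - 1) * Real.Gamma s)
        = (s - 1) * Real.log (k / ν) + Real.log (Real.Gamma s) := by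
    intro s hs
    rw [Real.log_mul (ne_of_gt (Real.rpow_pos_of_pos hq _))
      (ne_of_gt (Real.Gamma_pos_of_pos hs)), Real.log_rpow hq]
  have hL : 0 ≤ Real.log (k / ν) := Real.log_nonneg ((one_le_div hν).mpr hkν)
  have hG := logGamma_superadd ht1 hu1
  simp only [Gammaknu, hsum, ← ht, ← hu]
  rw [hlog t (by linarith), hlog u (by linarith), hlog (t + u) (by linarith)]
  nlinarith [hL, hG]
end

section
/- Let k > 0 and ν > 0 be real, and let x, y > 0. (a) If (x,y) ∈ (0,kν]×[2kν,∞) or (x,y) ∈ [2kν,∞)×(0,kν], then B_{k,ν}(x,y) ≥ (ν/k)·(1/2)^{(x+y)/(kν)−2}. (b) If (x,y) ∈ [kν,2kν]×[kν,2kν], then B_{k,ν}(x,y) ≤ (ν/k)·(1/2)^{(x+y)/(kν)−2}. -/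
open Real Filter Topology

open MeasureTheory Set

private lemma bernoulli_nonpos {y c : ℝ} (hy : 0 < y) (hc : c ≤ 0) :
    1 + c * (y - 1) ≤ y ^ c := by
  have h1 : Real.log y * c + 1 ≤ Real.exp (Real.log y * c) := Real.add_one_le_exp _
  have h2 : Real.log y ≤ y - 1 := Real.log_le_sub_one_of_pos hy
  have h3 : c * (y - 1) ≤ Real.log y * c := by nlinarith
  rw [Real.rpow_def_of_pos hy]
  linarith


private lemma beta_integrable {u v : ℝ} (hu : 0 < u) (hv : 0 < v) :
    IntervalIntegrable (fun t : ℝ => t ^ (u-1) * (1-t) ^ (v-1)) volume 0 1 := by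
  have h1 : IntervalIntegrable (fun t : ℝ => t ^ (u-1) * (1-t) ^ (v-1)) volume 0 (1/2) := by
    apply IntervalIntegrable.mul_continuousOn (intervalIntegral.intervalIntegrable_rpow' (by linarith))
    apply ContinuousOn.rpow_const (by fun_prop)
    intro t ht
    rw [uIcc_of_le (by norm_num)] at ht
    left
    have := ht.2
    intro h; rw [sub_eq_zero] at h; rw [← h] at this; norm_num at this
  have h2 : IntervalIntegrable (fun t : ℝ => t ^ (u-1) * (1-t) ^ (v-1)) volume (1/2) 1 := by
    have hbase : IntervalIntegrable (fun t : ℝ => (1-t) ^ (v-1)) volume (1/2) 1 := by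
      have h := (intervalIntegral.intervalIntegrable_rpow' (a:=0) (b:=1/2) (r:=v-1) (by linarith)).comp_sub_left 1
      norm_num at h
      exact h.symm
    apply hbase.continuousOn_mul
    apply ContinuousOn.rpow_const (by fun_prop)
    intro t ht
    rw [uIcc_of_le (by norm_num)] at ht
    left
    have := ht.1
    intro h; rw [h] at this; norm_num at this
  exact h1.trans h2

private lemma real_beta {u v : ℝ} (hu : 0 < u) (hv : 0 < v) :
    Real.Gamma u * Real.Gamma v
      = Real.Gamma (u+v) * ∫ t in (0:ℝ)..1, t ^ (u-1) * (1-t) ^ (v-1) := by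
  have h := Complex.Gamma_mul_Gamma_eq_betaIntegral (s := (u:ℂ)) (t := (v:ℂ))
    (by simpa using hu) (by simpa using hv)
  have hβ : Complex.betaIntegral (u:ℂ) (v:ℂ)
      = ((∫ t in (0:ℝ)..1, t ^ (u-1) * (1-t) ^ (v-1) : ℝ) : ℂ) := by
    have e1 : Complex.betaIntegral (u:ℂ) (v:ℂ)
        = ∫ t in (0:ℝ)..1, ((t ^ (u-1) * (1-t) ^ (v-1) : ℝ) : ℂ) := by
      rw [Complex.betaIntegral]
      apply intervalIntegral.integral_congr
      intro t ht
      rw [uIcc_of_le (by norm_num)] at ht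
      simp only
      push_cast [Complex.ofReal_cpow ht.1, Complex.ofReal_cpow (by linarith [ht.2] : (0:ℝ) ≤ 1 - t)]
      ring
    rw [e1]
    exact_mod_cast RCLike.intervalIntegral_ofReal (𝕜 := ℂ)
      (f := fun t : ℝ => t ^ (u-1) * (1-t) ^ (v-1)) (a := 0) (b := 1) (μ := volume)
  rw [hβ, ← Complex.ofReal_add, Complex.Gamma_ofReal, Complex.Gamma_ofReal,
    Complex.Gamma_ofReal, ← Complex.ofReal_mul, ← Complex.ofReal_mul] at h
  exact_mod_cast h

private lemma beta_div {u v : ℝ} (hu : 0 < u) (hv : 0 < v) :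
    Real.Gamma u * Real.Gamma v / Real.Gamma (u+v)
      = ∫ t in (0:ℝ)..1, t ^ (u-1) * (1-t) ^ (v-1) := by
  rw [real_beta hu hv, mul_comm, mul_div_assoc,
    div_self (Real.Gamma_pos_of_pos (show (0:ℝ) < u + v by linarith)).ne', mul_one]

private lemma poly_int (a b c : ℝ) : ∫ t in (0:ℝ)..1, (a + b*t + c*t^2) = a + b/2 + c/3 := by
  have h2 : IntervalIntegrable (fun t : ℝ => c*t^2) volume 0 1 :=
    (Continuous.intervalIntegrable (by continuity) 0 1)
  have h3 : IntervalIntegrable (fun t : ℝ => b*t) volume 0 1 :=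
    (Continuous.intervalIntegrable (by continuity) 0 1)
  rw [show (fun t : ℝ => a + b*t + c*t^2) = (fun t : ℝ => (a + b*t) + c*t^2) from rfl,
    intervalIntegral.integral_add (intervalIntegrable_const.add h3) h2,
    intervalIntegral.integral_add (intervalIntegrable_const) h3,
    intervalIntegral.integral_const, intervalIntegral.integral_const_mul,
    intervalIntegral.integral_const_mul, integral_id, integral_pow]
  simp only [smul_eq_mul]; ring

private lemma core_upper {u v : ℝ} (hu1 : 1 ≤ u) (hu2 : u ≤ 2) (hv1 : 1 ≤ v) (hv2 : v ≤ 2) :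
    (∫ t in (0:ℝ)..1, t ^ (u-1) * (1-t) ^ (v-1)) ≤ ((1:ℝ)/2) ^ (u+v-2) := by
  have key : ∀ t ∈ Set.Icc (0:ℝ) 1,
      t ^ (u-1) * (1-t) ^ (v-1)
        ≤ ((1:ℝ)/2) ^ (u+v-2) * ((1-u+v) + (2*u-2*v)*t + 0*t^2) := by
    intro t ht
    obtain ⟨ht0, ht1⟩ := ht
    have h1 : t ^ (u-1) ≤ ((1:ℝ)/2) ^ (u-1) * (1 + (u-1)*(2*t-1)) := by
      have e : t = (1/2) * (1 + (2*t-1)) := by ring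
      calc t ^ (u-1) = ((1/2) * (1 + (2*t-1))) ^ (u-1) := by rw [← e]
        _ = ((1:ℝ)/2)^(u-1) * (1+(2*t-1))^(u-1) :=
            Real.mul_rpow (by norm_num) (by linarith)
        _ ≤ ((1:ℝ)/2)^(u-1) * (1 + (u-1)*(2*t-1)) := by
            have := rpow_one_add_le_one_add_mul_self (show -1 ≤ 2*t-1 by linarith)
              (show (0:ℝ) ≤ u-1 by linarith) (show u-1 ≤ 1 by linarith)
            exact mul_le_mul_of_nonneg_left this (by positivity)
    have h2 : (1-t) ^ (v-1) ≤ ((1:ℝ)/2) ^ (v-1) * (1 + (v-1)*(1-2*t)) := by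
      have e : 1 - t = (1/2) * (1 + (1-2*t)) := by ring
      calc (1-t) ^ (v-1) = ((1/2) * (1 + (1-2*t))) ^ (v-1) := by rw [← e]
        _ = ((1:ℝ)/2)^(v-1) * (1+(1-2*t))^(v-1) :=
            Real.mul_rpow (by norm_num) (by linarith)
        _ ≤ ((1:ℝ)/2)^(v-1) * (1 + (v-1)*(1-2*t)) := by
            have := rpow_one_add_le_one_add_mul_self (show -1 ≤ 1-2*t by linarith)
              (show (0:ℝ) ≤ v-1 by linarith) (show v-1 ≤ 1 by linarith)
            exact mul_le_mul_of_nonneg_left this (by positivity)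
    have h3 : t ^ (u-1) * (1-t) ^ (v-1)
        ≤ (((1:ℝ)/2) ^ (u-1) * (1 + (u-1)*(2*t-1))) * (((1:ℝ)/2) ^ (v-1) * (1 + (v-1)*(1-2*t))) :=
      mul_le_mul h1 h2 (Real.rpow_nonneg (by linarith) _)
        (le_trans (Real.rpow_nonneg ht0 _) h1)
    refine h3.trans ?_
    have hP : (0:ℝ) ≤ ((1:ℝ)/2) ^ (u-1) := Real.rpow_nonneg (by norm_num) _
    have hQ : (0:ℝ) ≤ ((1:ℝ)/2) ^ (v-1) := Real.rpow_nonneg (by norm_num) _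
    have hE : ((1:ℝ)/2) ^ (u+v-2) = ((1:ℝ)/2) ^ (u-1) * ((1:ℝ)/2) ^ (v-1) := by
      rw [← Real.rpow_add (by norm_num)]; ring_nf
    rw [hE]
    nlinarith [mul_nonneg hP hQ, sq_nonneg (2*t-1),
      mul_nonneg (mul_nonneg (mul_nonneg hP hQ) (mul_nonneg (show (0:ℝ) ≤ u-1 by linarith)
        (show (0:ℝ) ≤ v-1 by linarith))) (sq_nonneg (2*t-1))]
  have hfi := beta_integrable (show (0:ℝ) < u by linarith) (show (0:ℝ) < v by linarith)
  have hgi : IntervalIntegrable (fun t : ℝ => ((1:ℝ)/2) ^ (u+v-2) *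
      ((1-u+v) + (2*u-2*v)*t + 0*t^2)) volume 0 1 :=
    (Continuous.intervalIntegrable (by continuity) 0 1)
  have hm := intervalIntegral.integral_mono_on (by norm_num) hfi hgi key
  refine hm.trans (le_of_eq ?_)
  rw [intervalIntegral.integral_const_mul, poly_int]
  ring
private lemma core_lower {u v : ℝ} (hu0 : 0 < u) (hu1 : u ≤ 1) (hv : 2 ≤ v) :
    ((1:ℝ)/2) ^ (u+v-2) ≤ ∫ t in (0:ℝ)..1, t ^ (u-1) * (1-t) ^ (v-1) := by
  have hC0 : (0:ℝ) ≤ ((1:ℝ)/2) ^ (u+v-2) := Real.rpow_nonneg (by norm_num) _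
  have key : ∀ t ∈ Set.Ioc (0:ℝ) 1,
      ((1:ℝ)/2) ^ (u+v-2) * ((1 + (u-1)*(2*t-1)) * (1 + (v-1)*(1-2*t)))
        ≤ t ^ (u-1) * (1-t) ^ (v-1) := by
    intro t ht
    obtain ⟨ht0, ht1⟩ := ht
    have hA : 0 ≤ 1 + (u-1)*(2*t-1) := by nlinarith
    have h1 : ((1:ℝ)/2) ^ (u-1) * (1 + (u-1)*(2*t-1)) ≤ t ^ (u-1) := by
      have hb : 1 + (u-1)*(2*t-1) ≤ (2*t) ^ (u-1) := by
        exact bernoulli_nonpos (show (0:ℝ) < 2*t by linarith) (show u-1 ≤ 0 by linarith)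
      have e : ((1:ℝ)/2) ^ (u-1) * (2*t) ^ (u-1) = t ^ (u-1) := by
        rw [← Real.mul_rpow (by norm_num) (by linarith)]
        congr 1
        ring
      calc ((1:ℝ)/2) ^ (u-1) * (1 + (u-1)*(2*t-1))
          ≤ ((1:ℝ)/2) ^ (u-1) * (2*t) ^ (u-1) :=
            mul_le_mul_of_nonneg_left hb (Real.rpow_nonneg (by norm_num) _)
        _ = t ^ (u-1) := e
    rcases le_or_gt (1 + (v-1)*(1-2*t)) 0 with hB | hB
    · have hle : ((1:ℝ)/2) ^ (u+v-2) * ((1 + (u-1)*(2*t-1)) * (1 + (v-1)*(1-2*t))) ≤ 0 := by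
        nlinarith [mul_nonneg hC0 hA]
      exact hle.trans (mul_nonneg (Real.rpow_nonneg ht0.le _) (Real.rpow_nonneg (by linarith) _))
    · have h2 : ((1:ℝ)/2) ^ (v-1) * (1 + (v-1)*(1-2*t)) ≤ (1-t) ^ (v-1) := by
        have hb : 1 + (v-1)*(1-2*t) ≤ (1+(1-2*t)) ^ (v-1) :=
          one_add_mul_self_le_rpow_one_add (show -1 ≤ 1-2*t by linarith)
            (show (1:ℝ) ≤ v-1 by linarith)
        have e : ((1:ℝ)/2) ^ (v-1) * (1+(1-2*t)) ^ (v-1) = (1-t) ^ (v-1) := by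
          rw [← Real.mul_rpow (by norm_num) (by linarith)]
          congr 1
          ring
        calc ((1:ℝ)/2) ^ (v-1) * (1 + (v-1)*(1-2*t))
            ≤ ((1:ℝ)/2) ^ (v-1) * (1+(1-2*t)) ^ (v-1) :=
              mul_le_mul_of_nonneg_left hb (Real.rpow_nonneg (by norm_num) _)
          _ = (1-t) ^ (v-1) := e
      have hE : ((1:ℝ)/2) ^ (u+v-2) = ((1:ℝ)/2) ^ (u-1) * ((1:ℝ)/2) ^ (v-1) := by
        rw [← Real.rpow_add (by norm_num : (0:ℝ) < 1/2)]
        congr 1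
        ring
      calc ((1:ℝ)/2)^(u+v-2) * ((1 + (u-1)*(2*t-1)) * (1 + (v-1)*(1-2*t)))
          = (((1:ℝ)/2)^(u-1) * (1 + (u-1)*(2*t-1)))
            * (((1:ℝ)/2)^(v-1) * (1 + (v-1)*(1-2*t))) := by rw [hE]; ring
        _ ≤ t ^ (u-1) * (1-t) ^ (v-1) :=
            mul_le_mul h1 h2 (mul_nonneg (Real.rpow_nonneg (by norm_num) _) hB.le)
              (Real.rpow_nonneg ht0.le _)
  have hfi := beta_integrable hu0 (show (0:ℝ) < v by linarith)
  have hgc : Continuous (fun t : ℝ =>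
      ((1:ℝ)/2) ^ (u+v-2) * ((1 + (u-1)*(2*t-1)) * (1 + (v-1)*(1-2*t)))) := by continuity
  have hm : (∫ t in (0:ℝ)..1, ((1:ℝ)/2) ^ (u+v-2) * ((1 + (u-1)*(2*t-1)) * (1 + (v-1)*(1-2*t))))
      ≤ ∫ t in (0:ℝ)..1, t ^ (u-1) * (1-t) ^ (v-1) := by
    rw [intervalIntegral.integral_of_le (by norm_num : (0:ℝ) ≤ 1),
      intervalIntegral.integral_of_le (by norm_num : (0:ℝ) ≤ 1)]
    exact setIntegral_mono_on (hgc.intervalIntegrable 0 1).1 hfi.1 measurableSet_Ioc key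
  refine le_trans ?_ hm
  have e : (fun t : ℝ => ((1:ℝ)/2) ^ (u+v-2) * ((1 + (u-1)*(2*t-1)) * (1 + (v-1)*(1-2*t))))
      = fun t : ℝ => (((1:ℝ)/2)^(u+v-2)*(1+(v-1)-(u-1)-(u-1)*(v-1)))
        + (((1:ℝ)/2)^(u+v-2)*(2*(u-1)-2*(v-1)+4*(u-1)*(v-1)))*t
        + (((1:ℝ)/2)^(u+v-2)*(-4*(u-1)*(v-1)))*t^2 := by funext t; ring
  rw [e, poly_int]
  have hab : (u-1)*(v-1) ≤ 0 := by nlinarith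
  nlinarith [mul_nonneg hC0 (neg_nonneg.2 hab)]

private lemma betaknu_eq {k ν x y : ℝ} (hk : 0 < k) (hν : 0 < ν) :
    Betaknu k ν x y
      = ν / k * (Real.Gamma (x/(k*ν)) * Real.Gamma (y/(k*ν))
          / Real.Gamma (x/(k*ν) + y/(k*ν))) := by
  have hkν : (0:ℝ) < k / ν := div_pos hk hν
  unfold Betaknu Gammaknu
  rw [add_div]
  have hPQ : (k/ν) ^ (x/(k*ν) - 1) * (k/ν) ^ (y/(k*ν) - 1)
      = (k/ν) ^ (x/(k*ν) + y/(k*ν) - 1) * (ν/k) := by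
    have e0 : (ν/k) = (k/ν) ^ (-1 : ℝ) := by
      rw [Real.rpow_neg_one, inv_div]
    rw [e0, ← Real.rpow_add hkν, ← Real.rpow_add hkν]
    congr 1
    ring
  have hR : (0:ℝ) < (k/ν) ^ (x/(k*ν) + y/(k*ν) - 1) := Real.rpow_pos_of_pos hkν _
  calc (k/ν) ^ (x/(k*ν) - 1) * Real.Gamma (x/(k*ν)) * ((k/ν) ^ (y/(k*ν) - 1) * Real.Gamma (y/(k*ν)))
        / ((k/ν) ^ (x/(k*ν) + y/(k*ν) - 1) * Real.Gamma (x/(k*ν) + y/(k*ν)))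
      = (k/ν) ^ (x/(k*ν) + y/(k*ν) - 1)
          * (ν/k * (Real.Gamma (x/(k*ν)) * Real.Gamma (y/(k*ν))))
        / ((k/ν) ^ (x/(k*ν) + y/(k*ν) - 1) * Real.Gamma (x/(k*ν) + y/(k*ν))) := by
        rw [show (k/ν) ^ (x/(k*ν) - 1) * Real.Gamma (x/(k*ν))
            * ((k/ν) ^ (y/(k*ν) - 1) * Real.Gamma (y/(k*ν)))
            = ((k/ν) ^ (x/(k*ν) - 1) * (k/ν) ^ (y/(k*ν) - 1))
              * (Real.Gamma (x/(k*ν)) * Real.Gamma (y/(k*ν))) from by ring, hPQ]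
        ring
    _ = ν/k * (Real.Gamma (x/(k*ν)) * Real.Gamma (y/(k*ν)))
          / Real.Gamma (x/(k*ν) + y/(k*ν)) :=
        mul_div_mul_left _ _ hR.ne'
    _ = ν / k * (Real.Gamma (x/(k*ν)) * Real.Gamma (y/(k*ν))
          / Real.Gamma (x/(k*ν) + y/(k*ν))) := by rw [mul_div_assoc]

theorem stmt14 (k ν x y : ℝ) (hk : 0 < k) (hν : 0 < ν) (hx : 0 < x) (hy : 0 < y) :
    (((x ≤ k * ν ∧ 2 * (k * ν) ≤ y) ∨ (2 * (k * ν) ≤ x ∧ y ≤ k * ν)) →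
      ν / k * ((1 : ℝ) / 2) ^ ((x + y) / (k * ν) - 2) ≤ Betaknu k ν x y) ∧
    ((k * ν ≤ x ∧ x ≤ 2 * (k * ν) ∧ k * ν ≤ y ∧ y ≤ 2 * (k * ν)) →
      Betaknu k ν x y ≤ ν / k * ((1 : ℝ) / 2) ^ ((x + y) / (k * ν) - 2)) := by
  have hkν : (0:ℝ) < k * ν := mul_pos hk hν
  have hu : 0 < x/(k*ν) := div_pos hx hkν
  have hv : 0 < y/(k*ν) := div_pos hy hkν
  have hνk : (0:ℝ) ≤ ν / k := (div_pos hν hk).le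
  have hexp : (x+y)/(k*ν) - 2 = x/(k*ν) + y/(k*ν) - 2 := by rw [add_div]
  constructor
  · rintro (⟨h1, h2⟩ | ⟨h1, h2⟩)
    · have hu1 : x/(k*ν) ≤ 1 := (div_le_one hkν).2 h1
      have hv2 : 2 ≤ y/(k*ν) := (le_div_iff₀ hkν).2 (by linarith)
      rw [betaknu_eq hk hν, beta_div hu hv, hexp]
      exact mul_le_mul_of_nonneg_left (core_lower hu hu1 hv2) hνk
    · have hv1 : y/(k*ν) ≤ 1 := (div_le_one hkν).2 h2
      have hu2 : 2 ≤ x/(k*ν) := (le_div_iff₀ hkν).2 (by linarith)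
      rw [betaknu_eq hk hν, mul_comm (Real.Gamma (x/(k*ν))), add_comm (x/(k*ν)),
        beta_div hv hu, show (x+y)/(k*ν) - 2 = y/(k*ν) + x/(k*ν) - 2 from by rw [add_div]; ring]
      exact mul_le_mul_of_nonneg_left (core_lower hv hv1 hu2) hνk
  · rintro ⟨h1, h2, h3, h4⟩
    have hu1 : 1 ≤ x/(k*ν) := (one_le_div hkν).2 h1
    have hu2 : x/(k*ν) ≤ 2 := (div_le_iff₀ hkν).2 (by linarith)
    have hv1 : 1 ≤ y/(k*ν) := (one_le_div hkν).2 h3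
    have hv2 : y/(k*ν) ≤ 2 := (div_le_iff₀ hkν).2 (by linarith)
    rw [betaknu_eq hk hν, beta_div hu hv, hexp]
    exact mul_le_mul_of_nonneg_left (core_upper hu1 hu2 hv1 hv2) hνk
end

section
/- Let k > 0, ν > 0, y > 0 and 0 < x₁ < x₂ be real. Then ((x₂+y)/(x₁+y))·(x₁/x₂)^{y/(kν)+1} < B_{k,ν}(x₂,y)/B_{k,ν}(x₁,y) < ((x₂+y)/(x₁+y))·(x₁/x₂)·((x₁+y+kν)/(x₂+y+kν))^{y/(kν)}. -/
open Real Filter Topology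

/-- g(u) = log(u+1) - log(u+1+t) - t*(log u - log(u+1)) is strictly decreasing on (0,∞). -/
lemma g_strictAnti (t : ℝ) (ht : 0 < t) :
    StrictAntiOn (fun u : ℝ => Real.log (u+1) - Real.log (u+1+t)
      - t * (Real.log u - Real.log (u+1))) (Set.Ioi 0) := by
  have hderiv : ∀ u : ℝ, 0 < u → HasDerivAt (fun u : ℝ => Real.log (u+1) - Real.log (u+1+t)
      - t * (Real.log u - Real.log (u+1))) (1/(u+1) - 1/(u+1+t) - t * (1/u - 1/(u+1))) u := by
    intro u hu
    have h1 : HasDerivAt (fun u : ℝ => Real.log (u+1)) (1/(u+1)) u := by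
      have := ((hasDerivAt_id u).add_const 1).log (by positivity)
      simpa [one_div] using this
    have h2 : HasDerivAt (fun u : ℝ => Real.log (u+1+t)) (1/(u+1+t)) u := by
      have := (((hasDerivAt_id u).add_const 1).add_const t).log (by positivity)
      simpa [one_div] using this
    have h3 : HasDerivAt (fun u : ℝ => Real.log u) (1/u) u := by
      simpa [one_div] using Real.hasDerivAt_log (ne_of_gt hu)
    exact ((h1.sub h2).sub (((h3.sub h1)).const_mul t)).congr_deriv (by ring)
  apply strictAntiOn_of_deriv_neg (convex_Ioi 0)
  · intro u hu
    exact (hderiv u hu).continuousAt.continuousWithinAt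
  · intro u hu
    rw [interior_Ioi] at hu
    have hu : (0:ℝ) < u := hu
    rw [(hderiv u hu).deriv]
    have e1 : 1/(u+1) - 1/(u+1+t) = t / ((u+1)*(u+1+t)) := by field_simp; ring
    have e2 : t * (1/u - 1/(u+1)) = t / (u*(u+1)) := by field_simp; ring
    rw [e1, e2, sub_neg]
    exact div_lt_div_of_pos_left ht (by positivity) (by nlinarith)

lemma h_strictMono (t : ℝ) (ht : 0 < t) :
    StrictMonoOn (fun u : ℝ => Real.log (u+1) - Real.log (u+1+t)
      - t * (Real.log (u+t+1) - Real.log (u+t+2))) (Set.Ioi 0) := by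
  have hderiv : ∀ u : ℝ, 0 < u → HasDerivAt (fun u : ℝ => Real.log (u+1) - Real.log (u+1+t)
      - t * (Real.log (u+t+1) - Real.log (u+t+2)))
      (1/(u+1) - 1/(u+1+t) - t * (1/(u+t+1) - 1/(u+t+2))) u := by
    intro u hu
    have h1 : HasDerivAt (fun u : ℝ => Real.log (u+1)) (1/(u+1)) u := by
      have := ((hasDerivAt_id u).add_const 1).log (by positivity)
      simpa [one_div] using this
    have h2 : HasDerivAt (fun u : ℝ => Real.log (u+1+t)) (1/(u+1+t)) u := by
      have := (((hasDerivAt_id u).add_const 1).add_const t).log (by positivity)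
      simpa [one_div] using this
    have h3 : HasDerivAt (fun u : ℝ => Real.log (u+t+1)) (1/(u+t+1)) u := by
      have := (((hasDerivAt_id u).add_const t).add_const 1).log (by positivity)
      simpa [one_div] using this
    have h4 : HasDerivAt (fun u : ℝ => Real.log (u+t+2)) (1/(u+t+2)) u := by
      have := (((hasDerivAt_id u).add_const t).add_const 2).log (by positivity)
      simpa [one_div] using this
    exact ((h1.sub h2).sub ((h3.sub h4).const_mul t)).congr_deriv (by ring)
  apply strictMonoOn_of_deriv_pos (convex_Ioi 0)
  · intro u hu
    exact (hderiv u hu).continuousAt.continuousWithinAt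
  · intro u hu
    rw [interior_Ioi] at hu
    have hu : (0:ℝ) < u := hu
    rw [(hderiv u hu).deriv]
    have e1 : 1/(u+1) - 1/(u+1+t) = t / ((u+1)*(u+1+t)) := by field_simp; ring
    have e2 : t * (1/(u+t+1) - 1/(u+t+2)) = t / ((u+t+1)*(u+t+2)) := by field_simp; norm_num
    rw [e1, e2, sub_pos]
    exact div_lt_div_of_pos_left ht (by positivity) (by nlinarith)

lemma term_lower {t u v : ℝ} (ht : 0 < t) (hu : 0 < u) (huv : u < v) :
    (u*(v+1)/((u+1)*v))^t < (u+1)*(v+1+t)/((u+1+t)*(v+1)) := by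
  have hv : 0 < v := hu.trans huv
  have hbase : 0 < u*(v+1)/((u+1)*v) := by positivity
  have hR : 0 < (u+1)*(v+1+t)/((u+1+t)*(v+1)) := by positivity
  rw [← Real.exp_log hR, Real.rpow_def_of_pos hbase, Real.exp_lt_exp]
  have hg := g_strictAnti t ht (Set.mem_Ioi.2 hu) (Set.mem_Ioi.2 hv) huv
  simp only at hg
  rw [Real.log_div (by positivity) (by positivity), Real.log_mul hu.ne' (by positivity),
    Real.log_mul (by positivity) hv.ne',
    Real.log_div (by positivity) (by positivity), Real.log_mul (by positivity) (by positivity),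
    Real.log_mul (by positivity) (by positivity)]
  nlinarith [hg]

lemma term_upper {t u v : ℝ} (ht : 0 < t) (hu : 0 < u) (huv : u < v) :
    (u+1)*(v+1+t)/((u+1+t)*(v+1)) < ((u+t+1)*(v+t+2)/((u+t+2)*(v+t+1)))^t := by
  have hv : 0 < v := hu.trans huv
  have hbase : 0 < (u+t+1)*(v+t+2)/((u+t+2)*(v+t+1)) := by positivity
  have hL : 0 < (u+1)*(v+1+t)/((u+1+t)*(v+1)) := by positivity
  rw [← Real.exp_log hL, Real.rpow_def_of_pos hbase, Real.exp_lt_exp]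
  have hg := h_strictMono t ht (Set.mem_Ioi.2 hu) (Set.mem_Ioi.2 hv) huv
  simp only at hg
  rw [Real.log_div (by positivity) (by positivity), Real.log_mul (by positivity) (by positivity),
    Real.log_mul (by positivity) (by positivity),
    Real.log_div (by positivity) (by positivity), Real.log_mul (by positivity) (by positivity),
    Real.log_mul (by positivity) (by positivity)]
  nlinarith [hg]

lemma tele_prod (c d : ℝ) (hc : 0 < c) (hd : 0 < d) (m : ℕ) :
    ∏ i ∈ Finset.range m, (c+i)*(d+1+i)/((c+1+i)*(d+i)) = c*(d+m)/((c+m)*d) := by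
  induction m with
  | zero => simp [div_self (by positivity : (c*d : ℝ) ≠ 0)]
  | succ n ih =>
    rw [Finset.prod_range_succ, ih]
    have h1 : (0:ℝ) < c + n := by positivity
    have h2 : (0:ℝ) < d + n := by positivity
    push_cast
    field_simp
    ring

lemma tele_tendsto (c d t : ℝ) (hc : 0 < c) (hd : 0 < d) :
    Tendsto (fun m : ℕ => (c*(d+m)/((c+m)*d))^t) atTop (𝓝 ((c/d)^t)) := by
  have hbase : Tendsto (fun m : ℕ => c*(d+m)/((c+m)*d)) atTop (𝓝 (c/d)) := by
    have h0 : Tendsto (fun x : ℝ => (d-c)/(c+x)) atTop (𝓝 0) :=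
      Tendsto.div_atTop tendsto_const_nhds (tendsto_atTop_add_const_left atTop c tendsto_id)
    have h1 : Tendsto (fun x : ℝ => (d+x)/(c+x)) atTop (𝓝 1) := by
      have := h0.const_add 1
      rw [add_zero] at this
      refine this.congr' ?_
      filter_upwards [eventually_gt_atTop 0] with x hx
      have : (0:ℝ) < c + x := by positivity
      field_simp
      ring
    have h2 : Tendsto (fun m : ℕ => (d+(m:ℝ))/(c+m)) atTop (𝓝 1) :=
      h1.comp tendsto_natCast_atTop_atTop
    have h3 := h2.const_mul (c/d)
    rw [mul_one] at h3
    refine h3.congr fun m => ?_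
    have h1 : (0:ℝ) < c + m := by positivity
    field_simp
  have hcont : ContinuousAt (fun x : ℝ => x ^ t) (c/d) :=
    Real.continuousAt_rpow_const _ _ (Or.inl (by positivity))
  exact hcont.tendsto.comp hbase

lemma prod_ge (f l : ℕ → ℝ) (hl : ∀ i, 0 < l i) (hfl : ∀ i, l i ≤ f i) (n : ℕ) :
    (f 0 / l 0) * ∏ i ∈ Finset.range (n+1), l i ≤ ∏ i ∈ Finset.range (n+1), f i := by
  rw [Finset.prod_range_succ', Finset.prod_range_succ']
  have key : ∏ i ∈ Finset.range n, l (i+1) ≤ ∏ i ∈ Finset.range n, f (i+1) :=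
    Finset.prod_le_prod (fun i _ => (hl _).le) (fun i _ => hfl _)
  have hl0 := hl 0
  have hf0 : 0 ≤ f 0 := (hl0.trans_le (hfl 0)).le
  calc f 0 / l 0 * ((∏ i ∈ Finset.range n, l (i+1)) * l 0)
      = (∏ i ∈ Finset.range n, l (i+1)) * f 0 := by field_simp
    _ ≤ (∏ i ∈ Finset.range n, f (i+1)) * f 0 := mul_le_mul_of_nonneg_right key hf0

lemma core_bounds {a b t : ℝ} (ha : 0 < a) (hab : a < b) (ht : 0 < t) :
    (a/b)^t < Gamma (a+t+1) * Gamma (b+1) / (Gamma (a+1) * Gamma (b+t+1)) ∧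
    Gamma (a+t+1) * Gamma (b+1) / (Gamma (a+1) * Gamma (b+t+1)) < ((a+t+1)/(b+t+1))^t := by
  have hb : 0 < b := ha.trans hab
  set F : ℕ → ℝ := fun i => ((a+1)+i)*((b+t+1)+i)/(((a+t+1)+i)*((b+1)+i)) with hF
  set L : ℕ → ℝ := fun i => ((a+i)*(b+1+i)/((a+1+i)*(b+i)))^t with hL
  set U : ℕ → ℝ := fun i => (((a+t+1)+i)*((b+t+1)+1+i)/(((a+t+1)+1+i)*((b+t+1)+i)))^t with hU
  -- basic positivity
  have hFpos : ∀ i, 0 < F i := fun i => by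
    have : (0:ℝ) ≤ i := Nat.cast_nonneg i
    positivity
  have hLpos : ∀ i, 0 < L i := fun i => by
    have : (0:ℝ) ≤ i := Nat.cast_nonneg i
    positivity
  have hUpos : ∀ i, 0 < U i := fun i => by
    have : (0:ℝ) ≤ i := Nat.cast_nonneg i
    positivity
  -- termwise inequalities
  have hLF : ∀ i, L i < F i := by
    intro i
    have hi : (0:ℝ) ≤ i := Nat.cast_nonneg i
    have h := term_lower (u := a + i) (v := b + i) ht (by positivity) (by linarith)
    convert h using 2 <;> ring
  have hFU : ∀ i, F i < U i := by
    intro i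
    have hi : (0:ℝ) ≤ i := Nat.cast_nonneg i
    have h := term_upper (u := a + i) (v := b + i) ht (by positivity) (by linarith)
    convert h using 2 <;> ring
  -- closed forms of telescoping products
  have hLprod : ∀ m, ∏ i ∈ Finset.range m, L i = (a*(b+m)/((a+m)*b))^t := by
    intro m
    simp only [hL]
    rw [Real.finset_prod_rpow _ _ (fun (i : ℕ) _ => by
      have : (0:ℝ) ≤ (i:ℝ) := Nat.cast_nonneg i
      positivity) t, tele_prod a b ha hb]
  have hUprod : ∀ m, ∏ i ∈ Finset.range m, U i
      = ((a+t+1)*((b+t+1)+m)/(((a+t+1)+m)*(b+t+1)))^t := by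
    intro m
    simp only [hU]
    rw [Real.finset_prod_rpow _ _ (fun (i : ℕ) _ => by
      have : (0:ℝ) ≤ (i:ℝ) := Nat.cast_nonneg i
      positivity) t, tele_prod (a+t+1) (b+t+1) (by positivity) (by positivity)]
  -- Gamma ratio as limit of products
  have hGa1 : 0 < Gamma (a+1) := Gamma_pos_of_pos (by positivity)
  have hGbt1 : 0 < Gamma (b+t+1) := Gamma_pos_of_pos (by positivity)
  have hratio : Tendsto (fun n => GammaSeq (a+t+1) n * GammaSeq (b+1) n /
      (GammaSeq (a+1) n * GammaSeq (b+t+1) n)) atTop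
      (𝓝 (Gamma (a+t+1) * Gamma (b+1) / (Gamma (a+1) * Gamma (b+t+1)))) :=
    Tendsto.div ((GammaSeq_tendsto_Gamma _).mul (GammaSeq_tendsto_Gamma _))
      ((GammaSeq_tendsto_Gamma _).mul (GammaSeq_tendsto_Gamma _)) (by positivity)
  have hCeq : ∀ᶠ n in atTop, GammaSeq (a+t+1) n * GammaSeq (b+1) n /
      (GammaSeq (a+1) n * GammaSeq (b+t+1) n) = ∏ i ∈ Finset.range (n+1), F i := by
    filter_upwards [eventually_ge_atTop 1] with n hn
    have hn0 : (0:ℝ) < (n:ℝ) := by exact_mod_cast Nat.lt_of_lt_of_le Nat.zero_lt_one hn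
    simp only [hF, Real.GammaSeq]
    rw [Finset.prod_div_distrib, Finset.prod_mul_distrib, Finset.prod_mul_distrib]
    have e1 : (n:ℝ)^(a+t+1) = (n:ℝ)^a * (n:ℝ)^t * (n:ℝ) := by
      rw [Real.rpow_add hn0, Real.rpow_add hn0, Real.rpow_one]
    have e2 : (n:ℝ)^(b+1) = (n:ℝ)^b * (n:ℝ) := by rw [Real.rpow_add hn0, Real.rpow_one]
    have e3 : (n:ℝ)^(a+1) = (n:ℝ)^a * (n:ℝ) := by rw [Real.rpow_add hn0, Real.rpow_one]
    have e4 : (n:ℝ)^(b+t+1) = (n:ℝ)^b * (n:ℝ)^t * (n:ℝ) := by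
      rw [Real.rpow_add hn0, Real.rpow_add hn0, Real.rpow_one]
    have hP1 : (0:ℝ) < ∏ j ∈ Finset.range (n+1), (a+1+j) :=
      Finset.prod_pos fun j _ => by have : (0:ℝ) ≤ (j:ℝ) := Nat.cast_nonneg j; positivity
    have hP2 : (0:ℝ) < ∏ j ∈ Finset.range (n+1), (b+t+1+j) :=
      Finset.prod_pos fun j _ => by have : (0:ℝ) ≤ (j:ℝ) := Nat.cast_nonneg j; positivity
    have hP3 : (0:ℝ) < ∏ j ∈ Finset.range (n+1), (a+t+1+j) :=
      Finset.prod_pos fun j _ => by have : (0:ℝ) ≤ (j:ℝ) := Nat.cast_nonneg j; positivity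
    have hP4 : (0:ℝ) < ∏ j ∈ Finset.range (n+1), (b+1+j) :=
      Finset.prod_pos fun j _ => by have : (0:ℝ) ≤ (j:ℝ) := Nat.cast_nonneg j; positivity
    have hfac : (0:ℝ) < (n.factorial : ℝ) := by exact_mod_cast n.factorial_pos
    have hna : (0:ℝ) < (n:ℝ)^a := rpow_pos_of_pos hn0 a
    have hnb : (0:ℝ) < (n:ℝ)^b := rpow_pos_of_pos hn0 b
    have hnt : (0:ℝ) < (n:ℝ)^t := rpow_pos_of_pos hn0 t
    rw [e1, e2, e3, e4]
    field_simp
  have hC : Tendsto (fun n => ∏ i ∈ Finset.range (n+1), F i) atTop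
      (𝓝 (Gamma (a+t+1) * Gamma (b+1) / (Gamma (a+1) * Gamma (b+t+1)))) :=
    hratio.congr' hCeq
  constructor
  · -- lower bound
    have hLlim : Tendsto (fun n : ℕ => (F 0 / L 0) * ∏ i ∈ Finset.range (n+1), L i) atTop
        (𝓝 ((F 0 / L 0) * (a/b)^t)) := by
      refine Tendsto.const_mul _ ?_
      refine Tendsto.congr (fun n => (hLprod (n+1)).symm) ?_
      exact (tele_tendsto a b t ha hb).comp (tendsto_add_atTop_nat 1)
    have hle : (F 0 / L 0) * (a/b)^t ≤
        Gamma (a+t+1) * Gamma (b+1) / (Gamma (a+1) * Gamma (b+t+1)) :=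
      le_of_tendsto_of_tendsto' hLlim hC fun n => prod_ge F L hLpos (fun i => (hLF i).le) n
    have hq : 1 < F 0 / L 0 := (one_lt_div (hLpos 0)).2 (hLF 0)
    have habt : (0:ℝ) < (a/b)^t := by positivity
    nlinarith
  · -- upper bound
    have hUlim : Tendsto (fun n : ℕ => (F 0 / U 0) * ∏ i ∈ Finset.range (n+1), U i) atTop
        (𝓝 ((F 0 / U 0) * ((a+t+1)/(b+t+1))^t)) := by
      refine Tendsto.const_mul _ ?_
      refine Tendsto.congr (fun n => (hUprod (n+1)).symm) ?_
      exact (tele_tendsto (a+t+1) (b+t+1) t (by positivity) (by positivity)).comp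
        (tendsto_add_atTop_nat 1)
    have hineq : ∀ n : ℕ, ∏ i ∈ Finset.range (n+1), F i ≤
        (F 0 / U 0) * ∏ i ∈ Finset.range (n+1), U i := by
      intro n
      have h := prod_ge U F hFpos (fun i => (hFU i).le) n
      have hF0 := hFpos 0
      have hU0 := hUpos 0
      have e : ∏ i ∈ Finset.range (n+1), F i
          = (F 0 / U 0) * ((U 0 / F 0) * ∏ i ∈ Finset.range (n+1), F i) := by
        field_simp
      rw [e]
      exact mul_le_mul_of_nonneg_left h (by positivity)
    have hge : Gamma (a+t+1) * Gamma (b+1) / (Gamma (a+1) * Gamma (b+t+1)) ≤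
        (F 0 / U 0) * ((a+t+1)/(b+t+1))^t :=
      le_of_tendsto_of_tendsto' hC hUlim hineq
    have hq : F 0 / U 0 < 1 := (div_lt_one (hUpos 0)).2 (hFU 0)
    have habt : (0:ℝ) < ((a+t+1)/(b+t+1))^t := by positivity
    nlinarith

lemma main_ineq {a b t : ℝ} (ha : 0 < a) (hab : a < b) (ht : 0 < t) :
    (b+t)/(a+t) * (a/b)^(t+1) < Gamma b * Gamma (a+t) / (Gamma a * Gamma (b+t)) ∧
    Gamma b * Gamma (a+t) / (Gamma a * Gamma (b+t)) <
      (b+t)/(a+t) * (a/b) * ((a+t+1)/(b+t+1))^t := by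
  have hb : 0 < b := ha.trans hab
  obtain ⟨hCl, hCu⟩ := core_bounds ha hab ht
  have hGa : 0 < Gamma a := Gamma_pos_of_pos ha
  have hGb : 0 < Gamma b := Gamma_pos_of_pos hb
  have hGat : 0 < Gamma (a+t) := Gamma_pos_of_pos (by positivity)
  have hGbt : 0 < Gamma (b+t) := Gamma_pos_of_pos (by positivity)
  have hrel : Gamma b * Gamma (a+t) / (Gamma a * Gamma (b+t))
      = (a*(b+t)/((a+t)*b)) * (Gamma (a+t+1) * Gamma (b+1) / (Gamma (a+1) * Gamma (b+t+1))) := by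
    rw [Real.Gamma_add_one (by positivity : a+t ≠ 0), Real.Gamma_add_one hb.ne',
      Real.Gamma_add_one ha.ne', Real.Gamma_add_one (by positivity : b+t ≠ 0)]
    field_simp
  have hK : (0:ℝ) < a*(b+t)/((a+t)*b) := by positivity
  constructor
  · calc (b+t)/(a+t) * (a/b)^(t+1) = (a*(b+t)/((a+t)*b)) * (a/b)^t := by
          rw [Real.rpow_add_one (by positivity : (a/b) ≠ 0)]
          field_simp
      _ < (a*(b+t)/((a+t)*b)) * (Gamma (a+t+1) * Gamma (b+1) / (Gamma (a+1) * Gamma (b+t+1))) :=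
          mul_lt_mul_of_pos_left hCl hK
      _ = Gamma b * Gamma (a+t) / (Gamma a * Gamma (b+t)) := hrel.symm
  · calc Gamma b * Gamma (a+t) / (Gamma a * Gamma (b+t))
        = (a*(b+t)/((a+t)*b)) * (Gamma (a+t+1) * Gamma (b+1) / (Gamma (a+1) * Gamma (b+t+1))) :=
          hrel
      _ < (a*(b+t)/((a+t)*b)) * ((a+t+1)/(b+t+1))^t := mul_lt_mul_of_pos_left hCu hK
      _ = (b+t)/(a+t) * (a/b) * ((a+t+1)/(b+t+1))^t := by
          have e : a*(b+t)/((a+t)*b) = (b+t)/(a+t) * (a/b) := by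
            field_simp
          rw [e]

theorem stmt15 (k ν y x₁ x₂ : ℝ) (hk : 0 < k) (hν : 0 < ν) (hy : 0 < y)
    (hx₁ : 0 < x₁) (h12 : x₁ < x₂) :
    (x₂ + y) / (x₁ + y) * (x₁ / x₂) ^ (y / (k * ν) + 1) <
        Betaknu k ν x₂ y / Betaknu k ν x₁ y ∧
      Betaknu k ν x₂ y / Betaknu k ν x₁ y <
        (x₂ + y) / (x₁ + y) * (x₁ / x₂) *
          ((x₁ + y + k * ν) / (x₂ + y + k * ν)) ^ (y / (k * ν)) := by
  have hx₂ : 0 < x₂ := hx₁.trans h12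
  have hc : 0 < k * ν := mul_pos hk hν
  have hr : 0 < k / ν := div_pos hk hν
  have hB : ∀ x : ℝ, 0 < x → Betaknu k ν x y
      = (k/ν)^(-1:ℝ) * (Gamma (x/(k*ν)) * Gamma (y/(k*ν)) / Gamma (x/(k*ν) + y/(k*ν))) := by
    intro x hx
    unfold Betaknu Gammaknu
    have hsum : (x+y)/(k*ν) = x/(k*ν) + y/(k*ν) := add_div x y (k*ν)
    rw [hsum]
    have ex : (k/ν)^(x/(k*ν) - 1) = (k/ν)^(x/(k*ν)) / (k/ν) := by
      rw [Real.rpow_sub hr, Real.rpow_one]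
    have ey : (k/ν)^(y/(k*ν) - 1) = (k/ν)^(y/(k*ν)) / (k/ν) := by
      rw [Real.rpow_sub hr, Real.rpow_one]
    have es : (k/ν)^(x/(k*ν) + y/(k*ν) - 1) = (k/ν)^(x/(k*ν)) * (k/ν)^(y/(k*ν)) / (k/ν) := by
      rw [Real.rpow_sub hr, Real.rpow_add hr, Real.rpow_one]
    have em : (k/ν)^(-1:ℝ) = ((k/ν))⁻¹ := by
      rw [Real.rpow_neg_one]
    rw [ex, ey, es, em]
    have hG1 : 0 < Gamma (x/(k*ν)) := Gamma_pos_of_pos (by positivity)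
    have hG2 : 0 < Gamma (y/(k*ν)) := Gamma_pos_of_pos (by positivity)
    have hG3 : 0 < Gamma (x/(k*ν) + y/(k*ν)) := Gamma_pos_of_pos (by positivity)
    have hp1 : (0:ℝ) < (k/ν)^(x/(k*ν)) := rpow_pos_of_pos hr _
    have hp2 : (0:ℝ) < (k/ν)^(y/(k*ν)) := rpow_pos_of_pos hr _
    field_simp
  have hG1 : 0 < Gamma (x₁/(k*ν)) := Gamma_pos_of_pos (by positivity)
  have hG2 : 0 < Gamma (x₂/(k*ν)) := Gamma_pos_of_pos (by positivity)
  have hGy : 0 < Gamma (y/(k*ν)) := Gamma_pos_of_pos (by positivity)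
  have hG3 : 0 < Gamma (x₁/(k*ν) + y/(k*ν)) := Gamma_pos_of_pos (by positivity)
  have hG4 : 0 < Gamma (x₂/(k*ν) + y/(k*ν)) := Gamma_pos_of_pos (by positivity)
  have hm : (0:ℝ) < (k/ν)^(-1:ℝ) := rpow_pos_of_pos hr _
  have hratio : Betaknu k ν x₂ y / Betaknu k ν x₁ y
      = Gamma (x₂/(k*ν)) * Gamma (x₁/(k*ν) + y/(k*ν))
        / (Gamma (x₁/(k*ν)) * Gamma (x₂/(k*ν) + y/(k*ν))) := by
    rw [hB x₁ hx₁, hB x₂ hx₂]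
    field_simp
  have e1 : (x₂+y)/(x₁+y) = (x₂/(k*ν)+y/(k*ν))/(x₁/(k*ν)+y/(k*ν)) := by
    rw [← add_div, ← add_div, div_div_div_cancel_right₀]
    exact hc.ne'
  have e2 : x₁/x₂ = (x₁/(k*ν))/(x₂/(k*ν)) := by
    rw [div_div_div_cancel_right₀]
    exact hc.ne'
  have e3 : (x₁+y+k*ν)/(x₂+y+k*ν) = (x₁/(k*ν)+y/(k*ν)+1)/(x₂/(k*ν)+y/(k*ν)+1) := by
    have h1 : x₁/(k*ν)+y/(k*ν)+1 = (x₁+y+k*ν)/(k*ν) := by field_simp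
    have h2 : x₂/(k*ν)+y/(k*ν)+1 = (x₂+y+k*ν)/(k*ν) := by field_simp
    rw [h1, h2, div_div_div_cancel_right₀]
    exact hc.ne'
  rw [hratio, e1, e2, e3]
  exact main_ineq (by positivity) (by gcongr) (by positivity)
end

section
/- Let k > 0, ν > 0, y > 0 and 0 < x₁ < x₂ be real. Then (x₂/(kν))^{x₂/(kν)−1}·(x₁/(kν))^{1−x₁/(kν)}·((x₂+y)/(kν))^{1−(x₂+y)/(kν)}·((x₁+y)/(kν))^{(x₁+y)/(kν)−1} ≤ B_{k,ν}(x₂,y)/B_{k,ν}(x₁,y) ≤ (x₂/(kν))^{x₂/(kν)}·(x₁/(kν))^{−x₁/(kν)}·((x₂+y)/(kν))^{−(x₂+y)/(kν)}·((x₁+y)/(kν))^{(x₁+y)/(kν)}. -/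
open Real Filter Topology

lemma log_sub_log_le {x y : ℝ} (hx : 0 < x) (hy : 0 < y) : log y - log x ≤ y / x - 1 := by
  rw [← log_div (ne_of_gt hy) (ne_of_gt hx)]
  exact log_le_sub_one_of_pos (by positivity)

lemma tele_upper {s b : ℝ} (hs : 0 < s) (hb : 0 < b) :
    (log (s + b) - log s) - (log (s + 1 + b) - log (s + 1)) ≤ 1 / s - 1 / (s + b) := by
  have h1 : (log (s + b) - log s) - (log (s + 1 + b) - log (s + 1))
      = log ((s + b) * (s + 1)) - log (s * (s + 1 + b)) := by
    rw [log_mul (by positivity) (by positivity), log_mul (by positivity) (by positivity)]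
    ring
  rw [h1]
  have h2 := log_sub_log_le (x := s * (s + 1 + b)) (y := (s + b) * (s + 1)) (by positivity) (by positivity)
  have h3 : (s + b) * (s + 1) / (s * (s + 1 + b)) - 1 = b / (s * (s + 1 + b)) := by
    rw [div_sub_one (by positivity)]; congr 1; ring
  have h4 : b / (s * (s + 1 + b)) ≤ b / (s * (s + b)) :=
    div_le_div_of_nonneg_left hb.le (by positivity) (by nlinarith)
  have h5 : b / (s * (s + b)) = 1 / s - 1 / (s + b) := by
    rw [div_sub_div _ _ (ne_of_gt hs) (by positivity)]; ring_nf
  linarith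

lemma tele_lower {s b : ℝ} (hs : 0 < s) (hb : 0 < b) :
    1 / (s + 1) - 1 / (s + 1 + b) ≤ (log (s + b) - log s) - (log (s + 1 + b) - log (s + 1)) := by
  have h1 : (log (s + b) - log s) - (log (s + 1 + b) - log (s + 1))
      = log ((s + b) * (s + 1)) - log (s * (s + 1 + b)) := by
    rw [log_mul (by positivity) (by positivity), log_mul (by positivity) (by positivity)]
    ring
  rw [h1]
  have h2 := log_sub_log_le (x := (s + b) * (s + 1)) (y := s * (s + 1 + b)) (by positivity) (by positivity)
  have h3 : s * (s + 1 + b) / ((s + b) * (s + 1)) - 1 = -(b / ((s + b) * (s + 1))) := by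
    rw [div_sub_one (by positivity), ← neg_div]; congr 1; ring
  have h4 : b / ((s + 1 + b) * (s + 1)) ≤ b / ((s + b) * (s + 1)) :=
    div_le_div_of_nonneg_left hb.le (by positivity) (by nlinarith)
  have h5 : b / ((s + 1 + b) * (s + 1)) = 1 / (s + 1) - 1 / (s + 1 + b) := by
    rw [div_sub_div _ _ (by positivity) (by positivity)]; ring_nf
  linarith


noncomputable def Sf (b : ℝ) (n : ℕ) (t : ℝ) : ℝ :=
  ∑ j ∈ Finset.range (n + 1), (log (t + b + j) - log (t + j))

noncomputable def Hf (b t : ℝ) : ℝ := (t + b) * log (t + b) - t * log t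

noncomputable def Ht (b t : ℝ) : ℝ := (t + b - 1) * log (t + b) - (t - 1) * log t

lemma hasDerivAt_Sf {b t : ℝ} (hb : 0 < b) (ht : 0 < t) (n : ℕ) :
    HasDerivAt (Sf b n)
      (∑ j ∈ Finset.range (n + 1), (1 / (t + b + j) - 1 / (t + j))) t := by
  apply HasDerivAt.fun_sum
  intro j _
  have h1 : HasDerivAt (fun x : ℝ => log (x + b + j)) (1 / (t + b + j)) t :=
    (((hasDerivAt_id t).add_const b).add_const (j : ℝ)).log (by positivity)
  have h2 : HasDerivAt (fun x : ℝ => log (x + j)) (1 / (t + j)) t :=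
    ((hasDerivAt_id t).add_const (j : ℝ)).log (by positivity)
  exact h1.sub h2

lemma hasDerivAt_Hf {b t : ℝ} (hb : 0 < b) (ht : 0 < t) :
    HasDerivAt (Hf b) (log (t + b) - log t) t := by
  have h1 : HasDerivAt (fun x : ℝ => (x + b) * log (x + b))
      (1 * log (t + b) + (t + b) * (1 / (t + b))) t :=
    ((hasDerivAt_id t).add_const b).mul (((hasDerivAt_id t).add_const b).log (by positivity))
  have h2 : HasDerivAt (fun x : ℝ => x * log x) (1 * log t + t * (1 / t)) t :=
    (hasDerivAt_id t).mul ((hasDerivAt_id t).log (ne_of_gt ht))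
  have := h1.sub h2
  refine this.congr_deriv ?_
  field_simp
  ring

lemma hasDerivAt_Ht {b t : ℝ} (hb : 0 < b) (ht : 0 < t) :
    HasDerivAt (Ht b) ((log (t + b) - log t) + (1 / t - 1 / (t + b))) t := by
  have h1 : HasDerivAt (fun x : ℝ => (x + b - 1) * log (x + b))
      (1 * log (t + b) + (t + b - 1) * (1 / (t + b))) t :=
    (((hasDerivAt_id t).add_const b).sub_const 1).mul
      (((hasDerivAt_id t).add_const b).log (by positivity))
  have h2 : HasDerivAt (fun x : ℝ => (x - 1) * log x) (1 * log t + (t - 1) * (1 / t)) t :=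
    ((hasDerivAt_id t).sub_const 1).mul ((hasDerivAt_id t).log (ne_of_gt ht))
  have := h1.sub h2
  refine this.congr_deriv ?_
  field_simp
  ring

lemma upper_est {b a₁ a₂ : ℝ} (hb : 0 < b) (h1 : 0 < a₁) (h12 : a₁ ≤ a₂) (n : ℕ) :
    Sf b n a₂ - Sf b n a₁ ≤
      (Hf b a₁ - Hf b a₂) + (Hf b (a₂ + (n + 1)) - Hf b (a₁ + (n + 1))) := by
  set c : ℝ := (n : ℝ) + 1 with hc
  have hc0 : 0 < c := by positivity
  have hV : ∀ t : ℝ, 0 < t → HasDerivAt (fun t => Hf b t - Hf b (t + c) + Sf b n t)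
      ((log (t + b) - log t) - (log (t + c + b) - log (t + c)) +
        ∑ j ∈ Finset.range (n + 1), (1 / (t + b + j) - 1 / (t + j))) t := by
    intro t ht
    have h2 : HasDerivAt (fun x : ℝ => Hf b (x + c)) ((log (t + c + b) - log (t + c)) * 1) t :=
      (hasDerivAt_Hf hb (by positivity)).comp t ((hasDerivAt_id t).add_const c)
    rw [mul_one] at h2
    exact ((hasDerivAt_Hf hb ht).sub h2).add (hasDerivAt_Sf hb ht n)
  have hderiv_nonpos : ∀ t : ℝ, 0 < t →
      (log (t + b) - log t) - (log (t + c + b) - log (t + c)) +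
        ∑ j ∈ Finset.range (n + 1), (1 / (t + b + j) - 1 / (t + j)) ≤ 0 := by
    intro t ht
    have tele : ∑ j ∈ Finset.range (n + 1),
        ((log (t + b + j) - log (t + j)) - (log (t + b + (j + 1 : ℕ)) - log (t + (j + 1 : ℕ))))
        = (log (t + b + (0 : ℕ)) - log (t + (0 : ℕ)))
          - (log (t + b + (n + 1 : ℕ)) - log (t + (n + 1 : ℕ))) :=
      Finset.sum_range_sub' (fun j => log (t + b + j) - log (t + j)) (n + 1)
    have hterm : ∀ j ∈ Finset.range (n + 1),
        ((log (t + b + j) - log (t + j)) - (log (t + b + (j + 1 : ℕ)) - log (t + (j + 1 : ℕ))))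
          ≤ 1 / (t + j) - 1 / (t + b + j) := by
      intro j _
      have e1 : t + b + ((j : ℕ) + 1 : ℕ) = t + (j : ℝ) + 1 + b := by push_cast; ring
      have e2 : t + ((j : ℕ) + 1 : ℕ) = t + (j : ℝ) + 1 := by push_cast; ring
      have e3 : t + b + (j : ℝ) = t + (j : ℝ) + b := by ring
      rw [e1, e2, e3]
      exact tele_upper (by positivity) hb
    have hsum := Finset.sum_le_sum hterm
    rw [tele] at hsum
    have e1 : (log (t + b + (0 : ℕ)) - log (t + (0 : ℕ))) = log (t + b) - log t := by norm_num
    have e2 : (log (t + b + (n + 1 : ℕ)) - log (t + (n + 1 : ℕ)))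
        = log (t + c + b) - log (t + c) := by push_cast [hc]; ring_nf
    rw [e1, e2] at hsum
    have : ∑ j ∈ Finset.range (n + 1), (1 / (t + b + j) - 1 / (t + j))
        = -∑ j ∈ Finset.range (n + 1), (1 / (t + j) - 1 / (t + b + j)) := by
      rw [← Finset.sum_neg_distrib]; apply Finset.sum_congr rfl; intros; ring
    rw [this]
    linarith
  have hanti : AntitoneOn (fun t => Hf b t - Hf b (t + c) + Sf b n t) (Set.Icc a₁ a₂) := by
    apply antitoneOn_of_deriv_nonpos (convex_Icc a₁ a₂)
    · intro t ht
      exact (hV t (lt_of_lt_of_le h1 ht.1)).continuousAt.continuousWithinAt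
    · intro t ht
      rw [interior_Icc] at ht
      exact (hV t (lt_trans h1 ht.1)).differentiableAt.differentiableWithinAt
    · intro t ht
      rw [interior_Icc] at ht
      have h0t : 0 < t := lt_trans h1 ht.1
      rw [(hV t h0t).deriv]
      exact hderiv_nonpos t h0t
  have := hanti (Set.left_mem_Icc.2 h12) (Set.right_mem_Icc.2 h12) h12
  simp only at this
  linarith

lemma lower_est {b a₁ a₂ : ℝ} (hb : 0 < b) (h1 : 0 < a₁) (h12 : a₁ ≤ a₂) (n : ℕ) :
    Ht b a₁ - Ht b a₂ ≤ Sf b n a₂ - Sf b n a₁ := by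
  have hM : ∀ t : ℝ, 0 < t → HasDerivAt (fun t => Ht b t + Sf b n t)
      (((log (t + b) - log t) + (1 / t - 1 / (t + b))) +
        ∑ j ∈ Finset.range (n + 1), (1 / (t + b + j) - 1 / (t + j))) t := by
    intro t ht
    exact (hasDerivAt_Ht hb ht).add (hasDerivAt_Sf hb ht n)
  have hderiv_nonneg : ∀ t : ℝ, 0 < t →
      0 ≤ ((log (t + b) - log t) + (1 / t - 1 / (t + b))) +
        ∑ j ∈ Finset.range (n + 1), (1 / (t + b + j) - 1 / (t + j)) := by
    intro t ht
    -- ∑_{j<n+1} (1/(t+j) - 1/(t+b+j)) ≤ (1/t - 1/(t+b)) + (log (t+b) - log t)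
    have split : ∑ j ∈ Finset.range (n + 1), (1 / (t + j) - 1 / (t + b + j))
        = (∑ j ∈ Finset.range n, (1 / (t + (j + 1 : ℕ)) - 1 / (t + b + (j + 1 : ℕ))))
          + (1 / (t + (0 : ℕ)) - 1 / (t + b + (0 : ℕ))) :=
      Finset.sum_range_succ' (fun j => 1 / (t + j) - 1 / (t + b + j)) n
    have tele : ∑ j ∈ Finset.range n,
        ((log (t + b + j) - log (t + j)) - (log (t + b + (j + 1 : ℕ)) - log (t + (j + 1 : ℕ))))
        = (log (t + b + (0 : ℕ)) - log (t + (0 : ℕ)))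
          - (log (t + b + (n : ℕ)) - log (t + (n : ℕ))) :=
      Finset.sum_range_sub' (fun j => log (t + b + j) - log (t + j)) n
    have hterm : ∀ j ∈ Finset.range n,
        (1 / (t + (j + 1 : ℕ)) - 1 / (t + b + (j + 1 : ℕ)))
          ≤ ((log (t + b + j) - log (t + j)) - (log (t + b + (j + 1 : ℕ)) - log (t + (j + 1 : ℕ)))) := by
      intro j _
      have e1 : t + b + ((j : ℕ) + 1 : ℕ) = t + (j : ℝ) + 1 + b := by push_cast; ring
      have e2 : t + ((j : ℕ) + 1 : ℕ) = t + (j : ℝ) + 1 := by push_cast; ring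
      have e3 : t + b + (j : ℝ) = t + (j : ℝ) + b := by ring
      rw [e1, e2, e3]
      exact tele_lower (by positivity) hb
    have hsum := Finset.sum_le_sum hterm
    rw [tele] at hsum
    have hGn : 0 ≤ log (t + b + (n : ℕ)) - log (t + (n : ℕ)) := by
      have : log (t + (n : ℕ)) ≤ log (t + b + (n : ℕ)) := by
        apply Real.log_le_log (by positivity)
        linarith
      linarith
    have e0 : (0 : ℕ) = (0 : ℕ) := rfl
    simp only [Nat.cast_zero, add_zero] at hsum split
    -- now: split gives the full sum; hsum bounds the shifted part
    have : ∑ j ∈ Finset.range (n + 1), (1 / (t + b + j) - 1 / (t + j))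
        = -∑ j ∈ Finset.range (n + 1), (1 / (t + j) - 1 / (t + b + j)) := by
      rw [← Finset.sum_neg_distrib]; apply Finset.sum_congr rfl; intros; ring
    rw [this, split]
    linarith
  have hmono : MonotoneOn (fun t => Ht b t + Sf b n t) (Set.Icc a₁ a₂) := by
    apply monotoneOn_of_deriv_nonneg (convex_Icc a₁ a₂)
    · intro t ht
      exact (hM t (lt_of_lt_of_le h1 ht.1)).continuousAt.continuousWithinAt
    · intro t ht
      rw [interior_Icc] at ht
      exact (hM t (lt_trans h1 ht.1)).differentiableAt.differentiableWithinAt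
    · intro t ht
      rw [interior_Icc] at ht
      have h0t : 0 < t := lt_trans h1 ht.1
      rw [(hM t h0t).deriv]
      exact hderiv_nonneg t h0t
  have := hmono (Set.left_mem_Icc.2 h12) (Set.right_mem_Icc.2 h12) h12
  simp only at this
  linarith

lemma g_nonneg {b t : ℝ} (hb : 0 < b) (ht : 0 < t) : 0 ≤ log (t + b) - log t := by
  have := Real.log_le_log ht (by linarith : t ≤ t + b)
  linarith

lemma g_anti {b t₁ t₂ : ℝ} (hb : 0 < b) (h0 : 0 < t₁) (h : t₁ ≤ t₂) :
    log (t₂ + b) - log t₂ ≤ log (t₁ + b) - log t₁ := by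
  have h02 : 0 < t₂ := lt_of_lt_of_le h0 h
  rw [← log_div (by positivity) (ne_of_gt h02), ← log_div (by positivity) (ne_of_gt h0)]
  apply Real.log_le_log (by positivity)
  rw [div_le_div_iff₀ h02 h0]
  nlinarith

lemma err_tendsto {b a₁ a₂ : ℝ} (hb : 0 < b) (h1 : 0 < a₁) (h12 : a₁ ≤ a₂) :
    Tendsto (fun n : ℕ => Hf b (a₂ + ((n : ℝ) + 1)) - Hf b (a₁ + ((n : ℝ) + 1))) atTop (𝓝 0) := by
  have key : ∀ n : ℕ, 0 ≤ Hf b (a₂ + ((n : ℝ) + 1)) - Hf b (a₁ + ((n : ℝ) + 1)) ∧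
      Hf b (a₂ + ((n : ℝ) + 1)) - Hf b (a₁ + ((n : ℝ) + 1)) ≤ b / (a₁ + ((n : ℝ) + 1)) * (a₂ - a₁) := by
    intro n
    set c : ℝ := (n : ℝ) + 1 with hc
    have hc0 : 0 < c := by positivity
    set L : ℝ := b / (a₁ + c) with hL
    have hL0 : 0 < L := by positivity
    -- Hf is monotone on [a₁+c, a₂+c]
    have hmono : MonotoneOn (Hf b) (Set.Icc (a₁ + c) (a₂ + c)) := by
      apply monotoneOn_of_deriv_nonneg (convex_Icc _ _)
      · intro t ht
        exact (hasDerivAt_Hf hb (lt_of_lt_of_le (by positivity) ht.1)).continuousAt.continuousWithinAt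
      · intro t ht
        rw [interior_Icc] at ht
        exact (hasDerivAt_Hf hb (lt_trans (by positivity) ht.1)).differentiableAt.differentiableWithinAt
      · intro t ht
        rw [interior_Icc] at ht
        have h0t : 0 < t := lt_trans (by positivity) ht.1
        rw [(hasDerivAt_Hf hb h0t).deriv]
        exact g_nonneg hb h0t
    have hanti : AntitoneOn (fun t => Hf b t - L * t) (Set.Icc (a₁ + c) (a₂ + c)) := by
      apply antitoneOn_of_deriv_nonpos (convex_Icc _ _)
      · intro t ht
        have h0t : 0 < t := lt_of_lt_of_le (by positivity) ht.1
        have hlin : HasDerivAt (fun x : ℝ => L * x) L t := by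
          simpa using (hasDerivAt_id t).const_mul L
        exact ((hasDerivAt_Hf hb h0t).sub hlin).continuousAt.continuousWithinAt
      · intro t ht
        rw [interior_Icc] at ht
        have h0t : 0 < t := lt_trans (by positivity) ht.1
        have hlin : HasDerivAt (fun x : ℝ => L * x) L t := by
          simpa using (hasDerivAt_id t).const_mul L
        exact ((hasDerivAt_Hf hb h0t).sub hlin).differentiableAt.differentiableWithinAt
      · intro t ht
        rw [interior_Icc] at ht
        have h0t : 0 < t := lt_trans (by positivity) ht.1
        have hlin : HasDerivAt (fun x : ℝ => L * x) L t := by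
          simpa using (hasDerivAt_id t).const_mul L
        have hd : HasDerivAt (fun t => Hf b t - L * t) (log (t + b) - log t - L) t :=
          (hasDerivAt_Hf hb h0t).sub hlin
        rw [hd.deriv]
        have hga : log (t + b) - log t ≤ log ((a₁ + c) + b) - log (a₁ + c) :=
          g_anti hb (by positivity) ht.1.le
        have hlog : log ((a₁ + c) + b) - log (a₁ + c) ≤ L := by
          have := log_sub_log_le (x := a₁ + c) (y := a₁ + c + b) (by positivity) (by positivity)
          have e : (a₁ + c + b) / (a₁ + c) - 1 = L := by
            rw [hL, div_sub_one (by positivity)]; congr 1; ring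
          linarith
        linarith
    have hmem1 : a₁ + c ∈ Set.Icc (a₁ + c) (a₂ + c) := Set.left_mem_Icc.2 (by linarith)
    have hmem2 : a₂ + c ∈ Set.Icc (a₁ + c) (a₂ + c) := Set.right_mem_Icc.2 (by linarith)
    constructor
    · have := hmono hmem1 hmem2 (by linarith)
      linarith
    · have := hanti hmem1 hmem2 (by linarith)
      simp only at this
      have : Hf b (a₂ + c) - Hf b (a₁ + c) ≤ L * (a₂ + c) - L * (a₁ + c) := by linarith
      calc Hf b (a₂ + c) - Hf b (a₁ + c) ≤ L * (a₂ + c) - L * (a₁ + c) := this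
        _ = b / (a₁ + c) * (a₂ - a₁) := by ring
  have hbound : Tendsto (fun n : ℕ => b / (a₁ + ((n : ℝ) + 1)) * (a₂ - a₁)) atTop (𝓝 0) := by
    have h0 : Tendsto (fun n : ℕ => a₁ + ((n : ℝ) + 1)) atTop atTop := by
      apply tendsto_atTop_add_const_left
      exact tendsto_atTop_add_const_right _ _ tendsto_natCast_atTop_atTop
    have := (tendsto_const_nhds.div_atTop h0 : Tendsto (fun n : ℕ => b / (a₁ + ((n : ℝ) + 1))) atTop (𝓝 0))
    simpa using this.mul_const (a₂ - a₁)
  exact squeeze_zero (fun n => (key n).1) (fun n => (key n).2) hbound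

lemma prod_tendsto {b a₁ a₂ : ℝ} (hb : 0 < b) (h1 : 0 < a₁) (h2 : 0 < a₂) :
    Tendsto (fun n : ℕ => ∏ j ∈ Finset.range (n + 1),
        (a₁ + j) * (a₂ + b + j) / ((a₂ + j) * (a₁ + b + j))) atTop
      (𝓝 (Real.Gamma a₂ * Real.Gamma (a₁ + b) / (Real.Gamma a₁ * Real.Gamma (a₂ + b)))) := by
  have hT : Tendsto (fun n : ℕ => Real.GammaSeq a₂ n * Real.GammaSeq (a₁ + b) n /
      (Real.GammaSeq a₁ n * Real.GammaSeq (a₂ + b) n)) atTop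
      (𝓝 (Real.Gamma a₂ * Real.Gamma (a₁ + b) / (Real.Gamma a₁ * Real.Gamma (a₂ + b)))) := by
    apply Filter.Tendsto.div
      ((Real.GammaSeq_tendsto_Gamma a₂).mul (Real.GammaSeq_tendsto_Gamma (a₁ + b)))
      ((Real.GammaSeq_tendsto_Gamma a₁).mul (Real.GammaSeq_tendsto_Gamma (a₂ + b)))
    exact ne_of_gt (mul_pos (Real.Gamma_pos_of_pos h1) (Real.Gamma_pos_of_pos (by positivity)))
  apply hT.congr'
  filter_upwards [eventually_ge_atTop 1] with n hn
  have np : (0 : ℝ) < (n : ℝ) := by exact_mod_cast Nat.pos_of_ne_zero (by omega)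
  have hfac : ((n.factorial : ℕ) : ℝ) ≠ 0 := by positivity
  have hP1 : 0 < ∏ j ∈ Finset.range (n + 1), (a₁ + (j : ℝ)) :=
    Finset.prod_pos fun j _ => by positivity
  have hP2 : 0 < ∏ j ∈ Finset.range (n + 1), (a₂ + (j : ℝ)) :=
    Finset.prod_pos fun j _ => by positivity
  have hQ1 : 0 < ∏ j ∈ Finset.range (n + 1), (a₁ + b + (j : ℝ)) :=
    Finset.prod_pos fun j _ => by positivity
  have hQ2 : 0 < ∏ j ∈ Finset.range (n + 1), (a₂ + b + (j : ℝ)) :=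
    Finset.prod_pos fun j _ => by positivity
  have key : (n : ℝ) ^ a₂ * (n : ℝ) ^ (a₁ + b) = (n : ℝ) ^ a₁ * (n : ℝ) ^ (a₂ + b) := by
    rw [← Real.rpow_add np, ← Real.rpow_add np]
    ring_nf
  have prod_split : ∏ j ∈ Finset.range (n + 1),
      (a₁ + j) * (a₂ + b + j) / ((a₂ + j) * (a₁ + b + j))
      = (∏ j ∈ Finset.range (n + 1), (a₁ + (j : ℝ))) *
          (∏ j ∈ Finset.range (n + 1), (a₂ + b + (j : ℝ))) /
        ((∏ j ∈ Finset.range (n + 1), (a₂ + (j : ℝ))) *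
          (∏ j ∈ Finset.range (n + 1), (a₁ + b + (j : ℝ)))) := by
    rw [Finset.prod_div_distrib, Finset.prod_mul_distrib, Finset.prod_mul_distrib]
  rw [Real.GammaSeq, Real.GammaSeq, Real.GammaSeq, Real.GammaSeq, prod_split]
  rw [div_mul_div_comm, div_mul_div_comm, div_div_div_eq]
  rw [div_eq_div_iff (by positivity) (by positivity)]
  linear_combination (((n.factorial : ℕ) : ℝ) * ((n.factorial : ℕ) : ℝ) *
    (∏ j ∈ Finset.range (n + 1), (a₁ + (j : ℝ))) *
    (∏ j ∈ Finset.range (n + 1), (a₂ + b + (j : ℝ))) *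
    (∏ j ∈ Finset.range (n + 1), (a₂ + (j : ℝ))) *
    (∏ j ∈ Finset.range (n + 1), (a₁ + b + (j : ℝ)))) * key

lemma sum_log_eq {b a₁ a₂ : ℝ} (hb : 0 < b) (h1 : 0 < a₁) (h2 : 0 < a₂) (n : ℕ) :
    log (∏ j ∈ Finset.range (n + 1), (a₁ + j) * (a₂ + b + j) / ((a₂ + j) * (a₁ + b + j)))
      = Sf b n a₂ - Sf b n a₁ := by
  rw [Real.log_prod (fun j _ => by positivity)]
  unfold Sf
  rw [← Finset.sum_sub_distrib]
  apply Finset.sum_congr rfl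
  intro j _
  rw [log_div (by positivity) (by positivity), log_mul (by positivity) (by positivity),
    log_mul (by positivity) (by positivity)]
  ring

lemma core {b a₁ a₂ : ℝ} (hb : 0 < b) (h1 : 0 < a₁) (h12 : a₁ < a₂) :
    Real.exp (Ht b a₁ - Ht b a₂) ≤
      Real.Gamma a₂ * Real.Gamma (a₁ + b) / (Real.Gamma a₁ * Real.Gamma (a₂ + b)) ∧
    Real.Gamma a₂ * Real.Gamma (a₁ + b) / (Real.Gamma a₁ * Real.Gamma (a₂ + b)) ≤
      Real.exp (Hf b a₁ - Hf b a₂) := by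
  have h2 : 0 < a₂ := h1.trans h12
  set R := Real.Gamma a₂ * Real.Gamma (a₁ + b) / (Real.Gamma a₁ * Real.Gamma (a₂ + b)) with hRdef
  have hRpos : 0 < R := by
    apply div_pos (mul_pos (Real.Gamma_pos_of_pos h2) (Real.Gamma_pos_of_pos (by positivity)))
      (mul_pos (Real.Gamma_pos_of_pos h1) (Real.Gamma_pos_of_pos (by positivity)))
  have hL : Tendsto (fun n : ℕ => Sf b n a₂ - Sf b n a₁) atTop (𝓝 (log R)) := by
    have := (prod_tendsto hb h1 h2).log hRpos.ne'
    exact this.congr fun n => sum_log_eq hb h1 h2 n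
  have hlow : Ht b a₁ - Ht b a₂ ≤ log R :=
    ge_of_tendsto' hL fun n => lower_est hb h1 h12.le n
  have hup : log R ≤ Hf b a₁ - Hf b a₂ := by
    have hg : Tendsto (fun n : ℕ => (Hf b a₁ - Hf b a₂) +
        (Hf b (a₂ + ((n : ℝ) + 1)) - Hf b (a₁ + ((n : ℝ) + 1)))) atTop
        (𝓝 ((Hf b a₁ - Hf b a₂) + 0)) :=
      tendsto_const_nhds.add (err_tendsto hb h1 h12.le)
    rw [add_zero] at hg
    refine le_of_tendsto_of_tendsto' hL hg fun n => ?_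
    have := upper_est hb h1 h12.le n
    linarith
  constructor
  · rw [← Real.exp_log hRpos]
    exact Real.exp_le_exp.2 hlow
  · rw [← Real.exp_log hRpos]
    exact Real.exp_le_exp.2 hup

lemma core' {b a₁ a₂ : ℝ} (hb : 0 < b) (h1 : 0 < a₁) (h12 : a₁ < a₂) :
    a₂ ^ (a₂ - 1) * a₁ ^ (1 - a₁) * (a₂ + b) ^ (1 - (a₂ + b)) * (a₁ + b) ^ ((a₁ + b) - 1)
      ≤ Real.Gamma a₂ * Real.Gamma (a₁ + b) / (Real.Gamma a₁ * Real.Gamma (a₂ + b)) ∧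
    Real.Gamma a₂ * Real.Gamma (a₁ + b) / (Real.Gamma a₁ * Real.Gamma (a₂ + b)) ≤
      a₂ ^ a₂ * a₁ ^ (-a₁) * (a₂ + b) ^ (-(a₂ + b)) * (a₁ + b) ^ (a₁ + b) := by
  have h2 : 0 < a₂ := h1.trans h12
  obtain ⟨hlow, hup⟩ := core hb h1 h12
  constructor
  · have e : a₂ ^ (a₂ - 1) * a₁ ^ (1 - a₁) * (a₂ + b) ^ (1 - (a₂ + b)) *
        (a₁ + b) ^ ((a₁ + b) - 1) = Real.exp (Ht b a₁ - Ht b a₂) := by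
      rw [rpow_def_of_pos h2, rpow_def_of_pos h1, rpow_def_of_pos (by positivity : (0:ℝ) < a₂ + b),
        rpow_def_of_pos (by positivity : (0:ℝ) < a₁ + b), ← Real.exp_add, ← Real.exp_add,
        ← Real.exp_add]
      unfold Ht
      congr 1
      ring
    rw [e]
    exact hlow
  · have e : a₂ ^ a₂ * a₁ ^ (-a₁) * (a₂ + b) ^ (-(a₂ + b)) * (a₁ + b) ^ (a₁ + b)
        = Real.exp (Hf b a₁ - Hf b a₂) := by
      rw [rpow_def_of_pos h2, rpow_def_of_pos h1, rpow_def_of_pos (by positivity : (0:ℝ) < a₂ + b),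
        rpow_def_of_pos (by positivity : (0:ℝ) < a₁ + b), ← Real.exp_add, ← Real.exp_add,
        ← Real.exp_add]
      unfold Hf
      congr 1
      ring
    rw [e]
    exact hup

theorem stmt16 (k ν y x₁ x₂ : ℝ) (hk : 0 < k) (hν : 0 < ν) (hy : 0 < y)
    (hx₁ : 0 < x₁) (h12 : x₁ < x₂) :
    (x₂ / (k * ν)) ^ (x₂ / (k * ν) - 1) * (x₁ / (k * ν)) ^ (1 - x₁ / (k * ν)) *
        ((x₂ + y) / (k * ν)) ^ (1 - (x₂ + y) / (k * ν)) *
        ((x₁ + y) / (k * ν)) ^ ((x₁ + y) / (k * ν) - 1) ≤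
      Betaknu k ν x₂ y / Betaknu k ν x₁ y ∧
    Betaknu k ν x₂ y / Betaknu k ν x₁ y ≤
      (x₂ / (k * ν)) ^ (x₂ / (k * ν)) * (x₁ / (k * ν)) ^ (-(x₁ / (k * ν))) *
        ((x₂ + y) / (k * ν)) ^ (-((x₂ + y) / (k * ν))) *
        ((x₁ + y) / (k * ν)) ^ ((x₁ + y) / (k * ν)) := by
  have hc : 0 < k * ν := mul_pos hk hν
  have hq : 0 < k / ν := div_pos hk hν
  have hx₂ : 0 < x₂ := hx₁.trans h12
  set c := k * ν with hcdef
  set a₁ := x₁ / c with ha₁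
  set a₂ := x₂ / c with ha₂
  set b := y / c with hbdef
  have hb : 0 < b := by positivity
  have h1 : 0 < a₁ := by positivity
  have h2 : 0 < a₂ := by positivity
  have h12' : a₁ < a₂ := by rw [ha₁, ha₂]; gcongr
  have hBeta : ∀ x : ℝ, 0 < x → Betaknu k ν x y
      = (k / ν) ^ (-1 : ℝ) * (Real.Gamma (x / c) * Real.Gamma b / Real.Gamma (x / c + b)) := by
    intro x hx
    simp only [Betaknu, Gammaknu, ← hcdef, ← hbdef]
    have hadd : (x + y) / c = x / c + b := by rw [hbdef, add_div]
    rw [hadd]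
    have hqe : (k / ν) ^ (x / c - 1) * (k / ν) ^ (b - 1)
        = (k / ν) ^ (x / c + b - 1) * (k / ν) ^ (-1 : ℝ) := by
      rw [← Real.rpow_add hq, ← Real.rpow_add hq]; congr 1; ring
    have hΓ : Real.Gamma (x / c + b) ≠ 0 := ne_of_gt (Real.Gamma_pos_of_pos (by positivity))
    have hABpos : (0:ℝ) < Real.Gamma (x / c + b) := Real.Gamma_pos_of_pos (by positivity)
    rw [← mul_div_assoc, div_eq_div_iff
      (ne_of_gt (mul_pos (rpow_pos_of_pos hq _) hABpos)) (ne_of_gt hABpos)]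
    linear_combination (Real.Gamma (x / c) * Real.Gamma b * Real.Gamma (x / c + b)) * hqe
  have hrat : Betaknu k ν x₂ y / Betaknu k ν x₁ y
      = Real.Gamma a₂ * Real.Gamma (a₁ + b) / (Real.Gamma a₁ * Real.Gamma (a₂ + b)) := by
    rw [hBeta x₂ hx₂, hBeta x₁ hx₁, ← ha₁, ← ha₂]
    have g1 : (0:ℝ) < Real.Gamma a₁ := Real.Gamma_pos_of_pos h1
    have g2 : (0:ℝ) < Real.Gamma a₂ := Real.Gamma_pos_of_pos h2
    have gb : (0:ℝ) < Real.Gamma b := Real.Gamma_pos_of_pos hb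
    have g1b : (0:ℝ) < Real.Gamma (a₁ + b) := Real.Gamma_pos_of_pos (by positivity)
    have g2b : (0:ℝ) < Real.Gamma (a₂ + b) := Real.Gamma_pos_of_pos (by positivity)
    have hqne : (k / ν) ^ (-1 : ℝ) ≠ 0 := ne_of_gt (rpow_pos_of_pos hq _)
    field_simp
  have e₁ : (x₁ + y) / c = a₁ + b := by rw [ha₁, hbdef, add_div]
  have e₂ : (x₂ + y) / c = a₂ + b := by rw [ha₂, hbdef, add_div]
  rw [e₁, e₂, hrat]
  exact core' hb h1 h12'
end

section
/- Let k > 0, ν > 0 and 0 < x < y be real. Then B_{k,ν}(x,y) ≤ √π·2^{1−2x/(kν)}·(ν/k)^{1/2}·Γ_{k,ν}(x)/Γ_{k,ν}(x + kν/2). -/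
open Real Filter Topology

lemma convex_shift {f : ℝ → ℝ} (hf : ConvexOn ℝ (Set.Ioi (0:ℝ)) f)
    {a b d : ℝ} (ha : 0 < a) (hab : a ≤ b) (hd : 0 < d) :
    f (a + d) - f a ≤ f (b + d) - f b := by
  have hb : 0 < b := lt_of_lt_of_le ha hab
  have had : a + d ∈ Set.Ioi (0:ℝ) := by simp only [Set.mem_Ioi]; linarith
  have hbd : b + d ∈ Set.Ioi (0:ℝ) := by simp only [Set.mem_Ioi]; linarith
  rcases eq_or_lt_of_le hab with rfl | hab'
  · exact le_refl _
  · have h1 : (f (a + d) - f a) / (a + d - a) ≤ (f (b + d) - f a) / (b + d - a) :=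
      hf.secant_mono (Set.mem_Ioi.mpr ha) had hbd (by intro h; linarith)
        (by intro h; linarith) (by linarith)
    have h2 : (f a - f (b + d)) / (a - (b + d)) ≤ (f b - f (b + d)) / (b - (b + d)) :=
      hf.secant_mono hbd (Set.mem_Ioi.mpr ha) (Set.mem_Ioi.mpr hb)
        (by intro h; linarith) (by intro h; linarith) (by linarith)
    have e2' : (f (b + d) - f a) / (b + d - a) ≤ (f (b + d) - f b) / d := by
      rw [show f a - f (b + d) = -(f (b + d) - f a) by ring,
        show a - (b + d) = -(b + d - a) by ring,
        show f b - f (b + d) = -(f (b + d) - f b) by ring,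
        show b - (b + d) = -d by ring, neg_div_neg_eq, neg_div_neg_eq] at h2
      exact h2
    have e1' : (f (a + d) - f a) / d ≤ (f (b + d) - f a) / (b + d - a) := by
      simpa using h1
    have h3 := e1'.trans e2'
    rw [div_le_div_iff₀ hd hd] at h3
    nlinarith [h3]

lemma gamma_key {t s : ℝ} (ht : 0 < t) (hts : t < s) :
    Real.Gamma s * Real.Gamma (2 * t) ≤ Real.Gamma t * Real.Gamma (t + s) := by
  have hG : ∀ u : ℝ, 0 < u → 0 < Real.Gamma u := fun u hu => Real.Gamma_pos_of_pos hu
  have h := convex_shift Real.convexOn_log_Gamma ht (by linarith : t ≤ 2 * t)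
    (by linarith : 0 < s - t)
  simp only [Function.comp_apply] at h
  have e1 : t + (s - t) = s := by ring
  have e2 : 2 * t + (s - t) = t + s := by ring
  rw [e1, e2] at h
  have := Real.exp_le_exp.mpr (by linarith :
    Real.log (Real.Gamma s) + Real.log (Real.Gamma (2 * t)) ≤
    Real.log (Real.Gamma t) + Real.log (Real.Gamma (t + s)))
  rwa [Real.exp_add, Real.exp_add, Real.exp_log (hG s (ht.trans hts)),
    Real.exp_log (hG _ (by linarith)), Real.exp_log (hG t ht),
    Real.exp_log (hG _ (by linarith))] at this

theorem stmt17 (k ν x y : ℝ) (hk : 0 < k) (hν : 0 < ν) (hx : 0 < x) (hxy : x < y) :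
    Betaknu k ν x y ≤
      Real.sqrt π * (2 : ℝ) ^ (1 - 2 * x / (k * ν)) * (ν / k) ^ ((1 : ℝ) / 2) *
        (Gammaknu k ν x / Gammaknu k ν (x + k * ν / 2)) := by
  have hkν : 0 < k * ν := mul_pos hk hν
  set t := x / (k * ν) with ht
  set s := y / (k * ν) with hs
  have htpos : 0 < t := div_pos hx hkν
  have hspos : 0 < s := div_pos (hx.trans hxy) hkν
  have hts : t < s := by rw [ht, hs]; gcongr
  have hG : ∀ u : ℝ, 0 < u → 0 < Real.Gamma u := fun u hu => Real.Gamma_pos_of_pos hu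
  have hc : (0:ℝ) < k / ν := div_pos hk hν
  -- LHS rewrite
  have harg : (x + y) / (k * ν) = t + s := by rw [ht, hs]; ring
  have harg2 : (x + k * ν / 2) / (k * ν) = t + 1 / 2 := by
    rw [ht, add_div]
    congr 1
    rw [div_eq_div_iff hkν.ne' two_ne_zero]
    ring
  have hLHS : Betaknu k ν x y =
      (ν / k) * (Real.Gamma t * Real.Gamma s / Real.Gamma (t + s)) := by
    rw [Betaknu, Gammaknu, Gammaknu, Gammaknu, harg, ← ht, ← hs]
    have hpowL : (k / ν) ^ (t - 1) * (k / ν) ^ (s - 1) / (k / ν) ^ (t + s - 1) = ν / k := by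
      rw [← Real.rpow_add hc, ← Real.rpow_sub hc,
        show t - 1 + (s - 1) - (t + s - 1) = -1 by ring, Real.rpow_neg_one, inv_div]
    have h1 : (k / ν) ^ (t + s - 1) ≠ 0 := ne_of_gt (Real.rpow_pos_of_pos hc _)
    have h2 : Real.Gamma (t + s) ≠ 0 := ne_of_gt (hG _ (by linarith))
    calc (k / ν) ^ (t - 1) * Real.Gamma t * ((k / ν) ^ (s - 1) * Real.Gamma s) /
          ((k / ν) ^ (t + s - 1) * Real.Gamma (t + s))
        = ((k / ν) ^ (t - 1) * (k / ν) ^ (s - 1) / (k / ν) ^ (t + s - 1)) *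
          (Real.Gamma t * Real.Gamma s / Real.Gamma (t + s)) := by
          field_simp
      _ = (ν / k) * (Real.Gamma t * Real.Gamma s / Real.Gamma (t + s)) := by rw [hpowL]
  -- RHS rewrite
  have hdup : Real.Gamma t * Real.Gamma (t + 1 / 2) =
      Real.Gamma (2 * t) * (2:ℝ) ^ (1 - 2 * t) * Real.sqrt π :=
    Real.Gamma_mul_Gamma_add_half t
  have h2t : 1 - 2 * x / (k * ν) = 1 - 2 * t := by rw [ht]; ring
  have hRHS : Real.sqrt π * (2 : ℝ) ^ (1 - 2 * x / (k * ν)) * (ν / k) ^ ((1 : ℝ) / 2) *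
        (Gammaknu k ν x / Gammaknu k ν (x + k * ν / 2)) =
      (ν / k) * (Real.Gamma t * Real.Gamma t / Real.Gamma (2 * t)) := by
    rw [h2t, Gammaknu, Gammaknu, harg2, ← ht]
    have hpow : (k / ν) ^ (t - 1) / (k / ν) ^ (t + 1 / 2 - 1) = (k / ν) ^ (-(1:ℝ)/2) := by
      rw [← Real.rpow_sub hc]; norm_num
    have hnk : (ν / k) ^ ((1:ℝ)/2) * (k / ν) ^ (-(1:ℝ)/2) = ν / k := by
      have : (k / ν) ^ (-(1:ℝ)/2) = (ν / k) ^ ((1:ℝ)/2) := by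
        rw [show -(1:ℝ)/2 = -(1/2) by ring, Real.rpow_neg hc.le, ← Real.inv_rpow hc.le]
        congr 1
        field_simp
      rw [this, ← Real.rpow_add (div_pos hν hk)]
      norm_num
    have hGhalf : Real.Gamma (t + 1 / 2) ≠ 0 := ne_of_gt (hG _ (by linarith))
    have hG2t : Real.Gamma (2 * t) ≠ 0 := ne_of_gt (hG _ (by linarith))
    have hsqrt : Real.sqrt π * (2:ℝ) ^ (1 - 2 * t) =
        Real.Gamma t * Real.Gamma (t + 1 / 2) / Real.Gamma (2 * t) := by
      rw [hdup]; field_simp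
    have hp1 : (k / ν) ^ (t - 1) ≠ 0 := ne_of_gt (Real.rpow_pos_of_pos hc _)
    have hp2 : (k / ν) ^ (t + 1 / 2 - 1) ≠ 0 := ne_of_gt (Real.rpow_pos_of_pos hc _)
    calc Real.sqrt π * (2:ℝ) ^ (1 - 2 * t) * (ν / k) ^ ((1:ℝ)/2) *
          ((k / ν) ^ (t - 1) * Real.Gamma t /
            ((k / ν) ^ (t + 1 / 2 - 1) * Real.Gamma (t + 1 / 2)))
        = (Real.sqrt π * (2:ℝ) ^ (1 - 2 * t)) *
          ((ν / k) ^ ((1:ℝ)/2) * ((k / ν) ^ (t - 1) / (k / ν) ^ (t + 1 / 2 - 1))) *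
          (Real.Gamma t / Real.Gamma (t + 1 / 2)) := by
          field_simp
      _ = (Real.Gamma t * Real.Gamma (t + 1 / 2) / Real.Gamma (2 * t)) * (ν / k) *
          (Real.Gamma t / Real.Gamma (t + 1 / 2)) := by rw [hpow, hnk, hsqrt]
      _ = (ν / k) * (Real.Gamma t * Real.Gamma t / Real.Gamma (2 * t)) := by
          field_simp
  rw [hLHS, hRHS]
  have hkey := gamma_key htpos hts
  have hνk : (0:ℝ) < ν / k := div_pos hν hk
  apply mul_le_mul_of_nonneg_left _ hνk.le
  rw [div_le_div_iff₀ (hG _ (by linarith)) (hG _ (by linarith))]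
  nlinarith [hG t htpos, hG s hspos, hkey]
end

section
/- Let k > 0, ν > 0 and x > 0 be real. Then for every natural number n, Ψ_{k,ν}(x + (n+1)kν) − Ψ_{k,ν}(x) = ∑_{j=0}^{n} 1/(x + j·kν); moreover the sequence n ↦ Ψ_{k,ν}(x + (n+1)kν) − (1/(kν))·log n converges, as n → ∞, to (1/(kν))·log(k/ν). -/
open Real Filter Topology

noncomputable def Psiknu (k ν x : ℝ) : ℝ :=
  deriv (fun t => Real.log (Gammaknu k ν t)) x

open Set
noncomputable def psiAux (y : ℝ) : ℝ := deriv (fun t => Real.log (Real.Gamma t)) y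

lemma ne_neg_nat {y : ℝ} (hy : 0 < y) : ∀ m : ℕ, y ≠ -m := by
  intro m h
  have h0 : (0:ℝ) ≤ m := Nat.cast_nonneg m
  rw [h] at hy; linarith

lemma hasDerivAt_logGamma {y : ℝ} (hy : 0 < y) :
    HasDerivAt (fun t => Real.log (Real.Gamma t)) (psiAux y) y :=
  ((Real.differentiableAt_Gamma (ne_neg_nat hy)).log
    (Real.Gamma_pos_of_pos hy).ne').hasDerivAt

lemma psiAux_add_one {y : ℝ} (hy : 0 < y) : psiAux (y + 1) = psiAux y + 1 / y := by
  have h1 : HasDerivAt (fun t : ℝ => Real.log (Real.Gamma (t + 1))) (psiAux (y + 1)) y := by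
    have := (hasDerivAt_logGamma (by linarith : (0:ℝ) < y + 1)).comp y
      ((hasDerivAt_id y).add_const 1)
    simpa [Function.comp_def] using this
  have h2 : HasDerivAt (fun t : ℝ => Real.log t + Real.log (Real.Gamma t))
      (1 / y + psiAux y) y := by
    simpa [one_div, Pi.add_def] using (Real.hasDerivAt_log hy.ne').add (hasDerivAt_logGamma hy)
  have heq : (fun t : ℝ => Real.log (Real.Gamma (t + 1))) =ᶠ[nhds y]
      (fun t : ℝ => Real.log t + Real.log (Real.Gamma t)) := by
    filter_upwards [eventually_gt_nhds hy] with t ht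
    rw [Real.Gamma_add_one ht.ne', Real.log_mul ht.ne' (Real.Gamma_pos_of_pos ht).ne']
  rw [h1.unique (h2.congr_of_eventuallyEq heq)]; ring

lemma psiAux_sum {s : ℝ} (hs : 0 < s) (n : ℕ) :
    psiAux (s + ((n : ℝ) + 1)) = psiAux s + ∑ j ∈ Finset.range (n + 1), 1 / (s + (j : ℝ)) := by
  induction n with
  | zero => simpa using psiAux_add_one hs
  | succ n ih =>
      have h1 : s + ((n : ℝ) + 1 + 1) = (s + ((n : ℝ) + 1)) + 1 := by ring
      have h2 : (0:ℝ) < s + ((n : ℝ) + 1) := by positivity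
      rw [Nat.cast_succ, h1, psiAux_add_one h2, ih, Finset.sum_range_succ _ (n+1)]
      push_cast; ring

lemma psiAux_mono {a b : ℝ} (ha : 0 < a) (hab : a ≤ b) : psiAux a ≤ psiAux b := by
  have hc : ConvexOn ℝ (Ioi (0:ℝ)) (fun t => Real.log (Real.Gamma t)) := by
    simpa [Function.comp_def] using Real.convexOn_log_Gamma
  have := hc.monotoneOn_deriv (fun t ht => (hasDerivAt_logGamma ht).differentiableAt)
  exact this (mem_Ioi.2 ha) (mem_Ioi.2 (lt_of_lt_of_le ha hab)) hab

lemma psiAux_sandwich {a : ℝ} (ha : 0 < a) :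
    psiAux a ≤ Real.log a ∧ Real.log a ≤ psiAux (a + 1) := by
  have hab : a < a + 1 := by linarith
  have hcont : ContinuousOn (fun t => Real.log (Real.Gamma t)) (Icc a (a + 1)) := by
    intro t ht
    exact ((hasDerivAt_logGamma (lt_of_lt_of_le ha ht.1)).differentiableAt.continuousAt).continuousWithinAt
  obtain ⟨c, hc, hceq⟩ := exists_hasDerivAt_eq_slope (fun t => Real.log (Real.Gamma t)) psiAux
    hab hcont (fun t ht => hasDerivAt_logGamma (lt_of_lt_of_le ha (le_of_lt ht.1)))
  have hval : psiAux c = Real.log a := by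
    rw [hceq, Real.Gamma_add_one ha.ne',
      Real.log_mul ha.ne' (Real.Gamma_pos_of_pos ha).ne']
    field_simp
    ring
  constructor
  · rw [← hval]; exact psiAux_mono ha hc.1.le
  · rw [← hval]; exact psiAux_mono (lt_trans ha hc.1) hc.2.le

open Set
lemma Psiknu_eq {k ν y : ℝ} (hk : 0 < k) (hν : 0 < ν) (hy : 0 < y) :
    Psiknu k ν y = 1 / (k * ν) * (Real.log (k / ν) + psiAux (y / (k * ν))) := by
  set c := k * ν with hc
  have hc0 : 0 < c := mul_pos hk hν
  have hkν : 0 < k / ν := div_pos hk hν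
  set L := Real.log (k / ν) with hL
  have h1 : HasDerivAt (fun t : ℝ => (t / c - 1) * L) (1 / c * L) y :=
    (((hasDerivAt_id y).div_const c).sub_const 1).mul_const L
  have h2 : HasDerivAt (fun t : ℝ => Real.log (Real.Gamma (t / c)))
      (psiAux (y / c) * (1 / c)) y := by
    have := (hasDerivAt_logGamma (div_pos hy hc0)).comp y ((hasDerivAt_id y).div_const c)
    simpa [Function.comp_def] using this
  have h : HasDerivAt (fun t : ℝ => (t / c - 1) * L + Real.log (Real.Gamma (t / c)))
      (1 / c * L + psiAux (y / c) * (1 / c)) y := h1.add h2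
  have heq : (fun t : ℝ => Real.log (Gammaknu k ν t)) =ᶠ[nhds y]
      (fun t : ℝ => (t / c - 1) * L + Real.log (Real.Gamma (t / c))) := by
    filter_upwards [eventually_gt_nhds hy] with t ht
    have hg : 0 < Real.Gamma (t / c) := Real.Gamma_pos_of_pos (div_pos ht hc0)
    have hp : (0:ℝ) < (k / ν) ^ (t / c - 1) := Real.rpow_pos_of_pos hkν _
    rw [Gammaknu, Real.log_mul hp.ne' hg.ne', Real.log_rpow hkν]
  have := (h.congr_of_eventuallyEq heq).deriv
  rw [Psiknu, this]; ring

theorem stmt18 (k ν x : ℝ) (hk : 0 < k) (hν : 0 < ν) (hx : 0 < x) :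
    (∀ n : ℕ, Psiknu k ν (x + ((n : ℝ) + 1) * (k * ν)) - Psiknu k ν x =
      ∑ j ∈ Finset.range (n + 1), 1 / (x + (j : ℝ) * (k * ν))) ∧
    Filter.Tendsto
      (fun n : ℕ => Psiknu k ν (x + ((n : ℝ) + 1) * (k * ν)) - 1 / (k * ν) * Real.log n)
      Filter.atTop (nhds (1 / (k * ν) * Real.log (k / ν))) := by
  set c := k * ν with hc
  have hc0 : 0 < c := mul_pos hk hν
  have hs : 0 < x / c := div_pos hx hc0
  set s := x / c with hsdef
  have harg : ∀ n : ℕ, (x + ((n : ℝ) + 1) * c) / c = s + ((n : ℝ) + 1) := by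
    intro n; rw [hsdef]; field_simp
  have hPsi : ∀ n : ℕ, Psiknu k ν (x + ((n : ℝ) + 1) * c) =
      1 / c * (Real.log (k / ν) + psiAux (s + ((n : ℝ) + 1))) := by
    intro n
    have hpos : 0 < x + ((n : ℝ) + 1) * c := by positivity
    rw [Psiknu_eq hk hν hpos, harg n]
  have hPsix : Psiknu k ν x = 1 / c * (Real.log (k / ν) + psiAux s) :=
    Psiknu_eq hk hν hx
  constructor
  · intro n
    rw [hPsi n, hPsix, psiAux_sum hs n]
    have key : ∀ j ∈ Finset.range (n + 1), 1 / c * (1 / (s + (j : ℝ))) = 1 / (x + (j : ℝ) * c) := by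
      intro j _
      have hsj : 0 < s + (j : ℝ) := by positivity
      rw [hsdef] at hsj ⊢
      rw [div_mul_div_comm, one_mul]
      congr 1
      field_simp
    rw [← Finset.sum_congr rfl key, ← Finset.mul_sum]
    ring
  · set L := Real.log (k / ν) with hL
    have hg : Tendsto (fun n : ℕ => psiAux (s + ((n : ℝ) + 1)) - Real.log n) atTop (nhds 0) := by
      have hv : Tendsto (fun n : ℕ => Real.log ((s + 1) / (n : ℝ) + 1)) atTop (nhds 0) := by
        have h0 : Tendsto (fun n : ℕ => (s + 1) / (n : ℝ) + 1) atTop (nhds (0 + 1)) :=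
          (tendsto_const_div_atTop_nhds_zero_nat (s + 1)).add tendsto_const_nhds
        rw [zero_add] at h0
        have := (Real.continuousAt_log one_ne_zero).tendsto.comp h0
        simpa [Function.comp_def] using this
      refine tendsto_of_tendsto_of_tendsto_of_le_of_le' tendsto_const_nhds hv ?_ ?_
      · filter_upwards [eventually_ge_atTop 1] with n hn
        have hn0 : (0:ℝ) < n := by exact_mod_cast hn
        have a1 : psiAux ((n : ℝ) + 1) ≤ psiAux (s + ((n : ℝ) + 1)) :=
          psiAux_mono (by positivity) (by linarith)
        have a2 : Real.log n ≤ psiAux ((n : ℝ) + 1) := (psiAux_sandwich hn0).2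
        linarith
      · filter_upwards [eventually_ge_atTop 1] with n hn
        have hn0 : (0:ℝ) < n := by exact_mod_cast hn
        have hpos : (0:ℝ) < s + ((n : ℝ) + 1) := by positivity
        have b1 : psiAux (s + ((n : ℝ) + 1)) ≤ Real.log (s + ((n : ℝ) + 1)) :=
          (psiAux_sandwich hpos).1
        have b2 : Real.log (s + ((n : ℝ) + 1)) - Real.log n
            = Real.log ((s + 1) / (n : ℝ) + 1) := by
          rw [← Real.log_div hpos.ne' hn0.ne']
          congr 1
          field_simp
          ring
        linarith
    have heq : ∀ n : ℕ, Psiknu k ν (x + ((n : ℝ) + 1) * c) - 1 / c * Real.log n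
        = 1 / c * L + 1 / c * (psiAux (s + ((n : ℝ) + 1)) - Real.log n) := by
      intro n; rw [hPsi n]; ring
    have := (tendsto_const_nhds (α := ℕ) (x := 1 / c * L)).add (hg.const_mul (1 / c))
    rw [mul_zero, add_zero] at this
    exact Tendsto.congr (fun n => (heq n).symm) this
end

section
/- Let k > 0, ν > 0, x > 0 and s > kν be real. Then ∑_{n=0}^∞ 1/(x + n·kν)^{s/(kν)} = (1/Γ_{k,ν}(s))·∫_0^∞ ((k/ν)·u)^{s/(kν)−1}·e^{−xu}/(1 − e^{−kνu}) du. -/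
open Real Filter Topology

open MeasureTheory in
lemma key_aux_s19 {c x p : ℝ} (hc : 0 < c) (hx : 0 < x) (hp : 1 < p) :
    Real.Gamma p * ∑' n : ℕ, 1 / (x + (n : ℝ) * c) ^ p =
      ∫ u in Set.Ioi (0 : ℝ), u ^ (p - 1) * (Real.exp (-x * u) / (1 - Real.exp (-c * u))) := by
  have hpos : ∀ n : ℕ, 0 < x + (n : ℝ) * c := fun n ↦ by positivity
  set F : ℝ → ℂ := fun t ↦ ((Real.exp (-x * t) / (1 - Real.exp (-c * t)) : ℝ) : ℂ)
  have hF : ∀ t ∈ Set.Ioi (0 : ℝ),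
      HasSum (fun n : ℕ ↦ (1 : ℂ) * Real.exp (-(x + (n : ℝ) * c) * t)) (F t) := by
    intro t ht
    rw [Set.mem_Ioi] at ht
    have hr0 : (0 : ℝ) ≤ Real.exp (-c * t) := (Real.exp_pos _).le
    have hr1 : Real.exp (-c * t) < 1 := by
      rw [Real.exp_lt_one_iff]; nlinarith
    have hgeo := (hasSum_geometric_of_lt_one hr0 hr1).mul_left (Real.exp (-x * t))
    have hFt : F t = ((Real.exp (-x * t) * (1 - Real.exp (-c * t))⁻¹ : ℝ) : ℂ) := by
      simp only [F, div_eq_mul_inv]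
    have hsc : HasSum (fun n : ℕ ↦ ((Real.exp (-x * t) * Real.exp (-c * t) ^ n : ℝ) : ℂ)) (F t) := by
      rw [hFt]; exact Complex.hasSum_ofReal.mpr hgeo
    refine hsc.congr_fun fun n ↦ ?_
    rw [one_mul]
    congr 1
    rw [← Real.exp_nat_mul, ← Real.exp_add]
    ring_nf
  have h_sum : Summable fun n : ℕ ↦ ‖(1 : ℂ)‖ / (x + (n : ℝ) * c) ^ p := by
    simp only [norm_one]
    set m := min x c with hm
    have hmpos : 0 < m := lt_min hx hc
    have hbound : ∀ n : ℕ, 1 / (x + (n : ℝ) * c) ^ p ≤ (1 / m ^ p) * (1 / ((n : ℝ) + 1) ^ p) := by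
      intro n
      rw [← mul_div_assoc, mul_one, div_div, ← Real.mul_rpow hmpos.le (by positivity)]
      apply one_div_le_one_div_of_le (by positivity)
      apply Real.rpow_le_rpow (by positivity) _ (by linarith)
      have h1 : m ≤ x := min_le_left _ _
      have h2 : m ≤ c := min_le_right _ _
      have : (0:ℝ) ≤ (n : ℝ) := n.cast_nonneg
      nlinarith
    refine Summable.of_nonneg_of_le (fun n ↦ by positivity) hbound ?_
    apply Summable.mul_left
    have : Summable fun n : ℕ ↦ 1 / ((n : ℝ)) ^ p := (Real.summable_one_div_nat_rpow).mpr hp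
    have := (summable_nat_add_iff 1).mpr this
    exact this.congr fun n ↦ by push_cast; ring_nf
  have hmellin := hasSum_mellin (a := fun _ : ℕ ↦ (1 : ℂ)) (p := fun n : ℕ ↦ x + (n : ℝ) * c)
    (F := F) (s := (p : ℂ)) (fun n ↦ Or.inr (hpos n)) (by simpa using zero_lt_one.trans hp)
    hF (by simpa using h_sum)
  -- identify the mellin transform with the real integral
  have hint : mellin F (p : ℂ) =
      ((∫ u in Set.Ioi (0 : ℝ),
        u ^ (p - 1) * (Real.exp (-x * u) / (1 - Real.exp (-c * u))) : ℝ) : ℂ) := by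
    have hpt : ∀ t ∈ Set.Ioi (0 : ℝ), (t : ℂ) ^ ((p : ℂ) - 1) • F t =
        ((t ^ (p - 1) * (Real.exp (-x * t) / (1 - Real.exp (-c * t))) : ℝ) : ℂ) := by
      intro t ht
      rw [Set.mem_Ioi] at ht
      rw [smul_eq_mul, show ((p : ℂ) - 1) = ((p - 1 : ℝ) : ℂ) by push_cast; ring,
        ← Complex.ofReal_cpow ht.le, ← Complex.ofReal_mul]
    rw [mellin, setIntegral_congr_fun measurableSet_Ioi hpt]
    exact integral_ofReal
  rw [hint] at hmellin
  have hterm : ∀ n : ℕ, (Complex.Gamma (p : ℂ) * (1 : ℂ) / ((x + (n : ℝ) * c : ℝ) : ℂ) ^ (p : ℂ))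
      = ((Real.Gamma p * (1 / (x + (n : ℝ) * c) ^ p) : ℝ) : ℂ) := by
    intro n
    rw [mul_one, Complex.Gamma_ofReal, ← Complex.ofReal_cpow (hpos n).le]
    push_cast
    ring
  have hmellin' : HasSum (fun n : ℕ ↦ ((Real.Gamma p * (1 / (x + (n : ℝ) * c) ^ p) : ℝ) : ℂ))
      (((∫ u in Set.Ioi (0 : ℝ),
        u ^ (p - 1) * (Real.exp (-x * u) / (1 - Real.exp (-c * u))) : ℝ) : ℂ)) := by
    refine hmellin.congr_fun fun n ↦ (hterm n).symm
  have := (Complex.hasSum_ofReal.mp hmellin').tsum_eq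
  rw [← this, tsum_mul_left]

theorem stmt19 (k ν x s : ℝ) (hk : 0 < k) (hν : 0 < ν) (hx : 0 < x) (hs : k * ν < s) :
    ∑' n : ℕ, 1 / (x + (n : ℝ) * (k * ν)) ^ (s / (k * ν)) =
      1 / Gammaknu k ν s *
        ∫ u in Set.Ioi (0 : ℝ),
          (k / ν * u) ^ (s / (k * ν) - 1) * Real.exp (-x * u) /
            (1 - Real.exp (-(k * ν) * u)) := by
  have hc : 0 < k * ν := mul_pos hk hν
  set p := s / (k * ν) with hpdef
  have hp : 1 < p := (one_lt_div hc).mpr hs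
  have hkν : 0 < k / ν := div_pos hk hν
  have hA : 0 < (k / ν) ^ (p - 1) := Real.rpow_pos_of_pos hkν _
  have hG : 0 < Real.Gamma p := Real.Gamma_pos_of_pos (by linarith)
  have hint : (∫ u in Set.Ioi (0 : ℝ),
      (k / ν * u) ^ (p - 1) * Real.exp (-x * u) / (1 - Real.exp (-(k * ν) * u))) =
      (k / ν) ^ (p - 1) * ∫ u in Set.Ioi (0 : ℝ),
        u ^ (p - 1) * (Real.exp (-x * u) / (1 - Real.exp (-(k * ν) * u))) := by
    rw [← MeasureTheory.integral_const_mul]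
    refine MeasureTheory.setIntegral_congr_fun measurableSet_Ioi fun u hu ↦ ?_
    rw [Set.mem_Ioi] at hu
    rw [Real.mul_rpow hkν.le hu.le]
    ring
  have hkey := key_aux_s19 hc hx hp
  rw [hint, ← hkey]
  unfold Gammaknu
  rw [← hpdef]
  field_simp
  ring_nf
  congr 1
  funext n
  ring
end
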